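/- arXiv:2503.14440 — 5 statements merged into one kernel-verified Lean document; each statement's English description precedes it below -/
import Mathlib

section
/- Let γ ≥ 0 and T > 0. Let X : [0,1] × [0,T] → ℝ³ and λ : [0,1] × [0,T] → ℝ be smooth with |∂_sX(s,t)| = 1 for all (s,t). Set Z := ∂_s³X − λ∂_sX and suppose ∂_tX = −(∂_sZ + γ(∂_sX·∂_sZ)∂_sX), with boundary conditions ∂_s²X(0,t) = ∂_s²X(1,t) = 0, ∂_s³X(0,t) = ∂_s³X(1,t) = 0, and λ(0,t) = λ(1,t) = 0 for all t ∈ [0,T]. Then the bending energy E(t) := (1/2)∫₀¹ |∂_s²X(s,t)|² ds satisfies E(t) ≤ e^{−2π⁴ t} E(0) for all t ∈ [0,T]. -/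
open MeasureTheory Set Filter Topology
open scoped RealInnerProductSpace

noncomputable section

abbrev E3 : Type := EuclideanSpace ℝ (Fin 3)

section FEEDAux

open Filter Topology

set_option maxHeartbeats 1000000

namespace FEED

variable {V : Type*} [NormedAddCommGroup V] [NormedSpace ℝ V]

/-- partial derivative in the first variable -/
def pd1 (f : ℝ → ℝ → V) (s t : ℝ) : V := deriv (fun u => f u t) s
/-- partial derivative in the second variable -/
def pd2 (f : ℝ → ℝ → V) (s t : ℝ) : V := deriv (fun u => f s u) t

theorem hasDerivAt_slice1 (f : ℝ → ℝ → V) (hf : ContDiff ℝ (⊤:ℕ∞) (Function.uncurry f))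
    (s t : ℝ) :
    HasDerivAt (fun u => f u t) (fderiv ℝ (Function.uncurry f) (s, t) (1, 0)) s := by
  have h1 : HasDerivAt (fun u : ℝ => ((u, t) : ℝ × ℝ)) ((1:ℝ), (0:ℝ)) s :=
    HasDerivAt.prodMk (hasDerivAt_id s) (hasDerivAt_const s t)
  exact ((hf.differentiable (by simp) (s, t)).hasFDerivAt).comp_hasDerivAt s h1

theorem hasDerivAt_slice2 (f : ℝ → ℝ → V) (hf : ContDiff ℝ (⊤:ℕ∞) (Function.uncurry f))
    (s t : ℝ) :
    HasDerivAt (fun v => f s v) (fderiv ℝ (Function.uncurry f) (s, t) (0, 1)) t := by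
  have h1 : HasDerivAt (fun v : ℝ => ((s, v) : ℝ × ℝ)) ((0:ℝ), (1:ℝ)) t :=
    HasDerivAt.prodMk (hasDerivAt_const t s) (hasDerivAt_id t)
  exact ((hf.differentiable (by simp) (s, t)).hasFDerivAt).comp_hasDerivAt t h1

theorem pd1_eq (f : ℝ → ℝ → V) (hf : ContDiff ℝ (⊤:ℕ∞) (Function.uncurry f)) (s t : ℝ) :
    pd1 f s t = fderiv ℝ (Function.uncurry f) (s, t) (1, 0) :=
  (hasDerivAt_slice1 f hf s t).deriv

theorem pd2_eq (f : ℝ → ℝ → V) (hf : ContDiff ℝ (⊤:ℕ∞) (Function.uncurry f)) (s t : ℝ) :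
    pd2 f s t = fderiv ℝ (Function.uncurry f) (s, t) (0, 1) :=
  (hasDerivAt_slice2 f hf s t).deriv

theorem contDiff_pd1 (f : ℝ → ℝ → V) (hf : ContDiff ℝ (⊤:ℕ∞) (Function.uncurry f)) :
    ContDiff ℝ (⊤:ℕ∞) (Function.uncurry (pd1 f)) := by
  have : Function.uncurry (pd1 f) = fun p : ℝ × ℝ =>
      fderiv ℝ (Function.uncurry f) p ((1:ℝ), (0:ℝ)) := by
    funext p
    exact pd1_eq f hf p.1 p.2
  rw [this]
  exact (hf.fderiv_right (by exact_mod_cast le_top)).clm_apply contDiff_const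

theorem contDiff_pd2 (f : ℝ → ℝ → V) (hf : ContDiff ℝ (⊤:ℕ∞) (Function.uncurry f)) :
    ContDiff ℝ (⊤:ℕ∞) (Function.uncurry (pd2 f)) := by
  have : Function.uncurry (pd2 f) = fun p : ℝ × ℝ =>
      fderiv ℝ (Function.uncurry f) p ((0:ℝ), (1:ℝ)) := by
    funext p
    exact pd2_eq f hf p.1 p.2
  rw [this]
  exact (hf.fderiv_right (by exact_mod_cast le_top)).clm_apply contDiff_const

theorem clairaut (f : ℝ → ℝ → V) (hf : ContDiff ℝ (⊤:ℕ∞) (Function.uncurry f)) :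
    pd1 (pd2 f) = pd2 (pd1 f) := by
  funext s t
  set F := Function.uncurry f with hFdef
  have hdF : Differentiable ℝ (fderiv ℝ F) :=
    (hf.fderiv_right (m := (⊤:ℕ∞)) (by exact_mod_cast le_top)).differentiable (by simp)
  have hsym : ∀ v w, fderiv ℝ (fderiv ℝ F) (s, t) v w = fderiv ℝ (fderiv ℝ F) (s, t) w v :=
    hf.contDiffAt.isSymmSndFDerivAt (by simp [minSmoothness_of_isRCLikeNormedField]; exact WithTop.coe_le_coe.2 (le_top : (2:ℕ∞) ≤ ⊤))
  have e : ∀ v w : ℝ × ℝ, fderiv ℝ (fun p : ℝ × ℝ => fderiv ℝ F p v) (s, t) w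
      = fderiv ℝ (fderiv ℝ F) (s, t) w v := by
    intro v w
    rw [fderiv_clm_apply hdF.differentiableAt (differentiableAt_const v)]
    simp
  have u2 : Function.uncurry (pd2 f) = fun p : ℝ × ℝ => fderiv ℝ F p ((0:ℝ), (1:ℝ)) :=
    funext fun p => pd2_eq f hf p.1 p.2
  have u1 : Function.uncurry (pd1 f) = fun p : ℝ × ℝ => fderiv ℝ F p ((1:ℝ), (0:ℝ)) :=
    funext fun p => pd1_eq f hf p.1 p.2
  have e1 : pd1 (pd2 f) s t = fderiv ℝ (fderiv ℝ F) (s, t) (1, 0) (0, 1) := by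
    rw [pd1_eq (pd2 f) (contDiff_pd2 f hf) s t, u2, e]
  have e2 : pd2 (pd1 f) s t = fderiv ℝ (fderiv ℝ F) (s, t) (0, 1) (1, 0) := by
    rw [pd2_eq (pd1 f) (contDiff_pd1 f hf) s t, u1, e]
  rw [e1, e2, hsym]

/-- the cotangent-type auxiliary function -/
private def cc (s : ℝ) : ℝ := Real.pi * (Real.cos (Real.pi * s) / Real.sin (Real.pi * s))

private theorem hasDerivAt_cc {s : ℝ} (hs : s ∈ Ioo (0:ℝ) 1) :
    HasDerivAt cc (-Real.pi ^ 2 - cc s ^ 2) s := by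
  have hsin : Real.sin (Real.pi * s) > 0 :=
    Real.sin_pos_of_pos_of_lt_pi (mul_pos Real.pi_pos hs.1)
      (by nlinarith [Real.pi_pos, hs.2])
  have hsin' : Real.sin (Real.pi * s) ≠ 0 := ne_of_gt hsin
  have hi : HasDerivAt (fun u : ℝ => Real.pi * u) Real.pi s := by
    simpa using (hasDerivAt_id s).const_mul Real.pi
  have hc : HasDerivAt (fun u => Real.cos (Real.pi * u)) (-Real.pi * Real.sin (Real.pi * s)) s := by
    have h2 := (Real.hasDerivAt_cos (Real.pi * s)).comp s hi
    have h3 : HasDerivAt (fun u => Real.cos (Real.pi * u))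
        (-Real.sin (Real.pi * s) * Real.pi) s := by
      simpa [Function.comp_def] using h2
    convert h3 using 1; ring
  have hsn : HasDerivAt (fun u => Real.sin (Real.pi * u)) (Real.pi * Real.cos (Real.pi * s)) s := by
    have h2 := (Real.hasDerivAt_sin (Real.pi * s)).comp s hi
    have h3 : HasDerivAt (fun u => Real.sin (Real.pi * u))
        (Real.cos (Real.pi * s) * Real.pi) s := by
      simpa [Function.comp_def] using h2
    convert h3 using 1; ring
  have hdiv := (hc.div hsn hsin')
  have h2 := hdiv.const_mul Real.pi
  refine h2.congr_deriv ?_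
  have hpy : Real.sin (Real.pi * s) ^ 2 + Real.cos (Real.pi * s) ^ 2 = 1 :=
    Real.sin_sq_add_cos_sq _
  simp only [cc]
  field_simp [cc]

private theorem tendsto_cc_sq (f : ℝ → ℝ) (hf : ContDiff ℝ 1 f) (h0 : f 0 = 0) :
    Tendsto (fun δ => cc δ * f δ ^ 2) (𝓝[>] (0:ℝ)) (𝓝 0) := by
  have hfd : HasDerivAt f (deriv f 0) 0 :=
    ((hf.differentiable one_ne_zero) 0).hasDerivAt
  have hslope : Tendsto (fun δ => f δ / δ) (𝓝[>] (0:ℝ)) (𝓝 (deriv f 0)) := by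
    have := hasDerivAt_iff_tendsto_slope.1 hfd
    have h2 := this.mono_left (nhdsWithin_mono 0 (fun x hx => ne_of_gt hx : Ioi (0:ℝ) ⊆ {(0:ℝ)}ᶜ))
    refine h2.congr (fun δ => ?_)
    simp [slope_def_field, h0, div_eq_div_iff]
  have hsin : Tendsto (fun δ => Real.sin (Real.pi * δ) / δ) (𝓝[>] (0:ℝ)) (𝓝 Real.pi) := by
    have hg : HasDerivAt (fun u => Real.sin (Real.pi * u)) Real.pi 0 := by
      have hi : HasDerivAt (fun u : ℝ => Real.pi * u) Real.pi 0 := by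
        simpa using (hasDerivAt_id (0:ℝ)).const_mul Real.pi
      have h2 := (Real.hasDerivAt_sin (Real.pi * 0)).comp 0 hi
      simpa [Function.comp_def] using h2
    have := hasDerivAt_iff_tendsto_slope.1 hg
    have h2 := this.mono_left (nhdsWithin_mono 0 (fun x hx => ne_of_gt hx : Ioi (0:ℝ) ⊆ {(0:ℝ)}ᶜ))
    refine h2.congr (fun δ => ?_)
    simp [slope_def_field]
  have hratio : Tendsto (fun δ => f δ / Real.sin (Real.pi * δ)) (𝓝[>] (0:ℝ))
      (𝓝 (deriv f 0 / Real.pi)) := by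
    have := hslope.div hsin (ne_of_gt Real.pi_pos)
    refine this.congr' ?_
    filter_upwards [self_mem_nhdsWithin] with δ (hδ : 0 < δ)
    simp only [Pi.div_apply]
    rw [div_div_div_cancel_right₀ (ne_of_gt hδ)]
  have hcos : Tendsto (fun δ => Real.pi * Real.cos (Real.pi * δ)) (𝓝[>] (0:ℝ))
      (𝓝 (Real.pi * 1)) := by
    have hco : Continuous fun δ : ℝ => Real.pi * Real.cos (Real.pi * δ) := by continuity
    have h2 := (hco.tendsto 0).mono_left (nhdsWithin_le_nhds : 𝓝[>] (0:ℝ) ≤ 𝓝 0)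
    simpa using h2
  have hfz : Tendsto f (𝓝[>] (0:ℝ)) (𝓝 0) := by
    have := ((hf.continuous).tendsto 0).mono_left (nhdsWithin_le_nhds (s := Ioi (0:ℝ)))
    simpa [h0] using this
  have hmain := (hcos.mul hratio).mul hfz
  rw [mul_zero] at hmain
  refine hmain.congr' ?_
  filter_upwards [self_mem_nhdsWithin] with δ (hδ : 0 < δ)
  have hsinpos : Real.sin (Real.pi * δ) ≠ 0 ∨ True := Or.inr trivial
  simp only [cc]
  ring

/-- Sharp Wirtinger / Poincaré inequality on [0,1] with Dirichlet BC. -/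
theorem wirtinger (f : ℝ → ℝ) (hf : ContDiff ℝ 1 f) (h0 : f 0 = 0) (h1 : f 1 = 0) :
    Real.pi ^ 2 * ∫ s in (0:ℝ)..1, f s ^ 2 ≤ ∫ s in (0:ℝ)..1, deriv f s ^ 2 := by
  have hfc : Continuous f := hf.continuous
  have hf' : Continuous (deriv f) := hf.continuous_deriv le_rfl
  set G : ℝ → ℝ := fun s => deriv f s ^ 2 - Real.pi ^ 2 * f s ^ 2 with hG
  have hGc : Continuous G := by
    exact (hf'.pow 2).sub ((continuous_const).mul (hfc.pow 2))
  have hGint : ∀ a b : ℝ, IntervalIntegrable G volume a b := fun a b =>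
    hGc.intervalIntegrable a b
  set P : ℝ → ℝ := fun u => ∫ s in (0:ℝ)..u, G s with hP
  have hPc : Continuous P := intervalIntegral.continuous_primitive hGint 0
  -- key inequality on subintervals
  have key : ∀ δ ∈ Ioo (0:ℝ) (1/2),
      cc (1 - δ) * f (1 - δ) ^ 2 - cc δ * f δ ^ 2 ≤ P (1 - δ) - P δ := by
    intro δ hδ
    have hδδ : δ ≤ 1 - δ := by linarith [hδ.2]
    have hsub : Icc δ (1 - δ) ⊆ Ioo (0:ℝ) 1 := fun x hx =>
      ⟨lt_of_lt_of_le hδ.1 hx.1, lt_of_le_of_lt hx.2 (by linarith [hδ.1])⟩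
    set hd : ℝ → ℝ := fun s =>
      (-Real.pi ^ 2 - cc s ^ 2) * f s ^ 2 + cc s * (2 * f s * deriv f s) with hhd
    have hccont : ContinuousOn cc (Ioo (0:ℝ) 1) := by
      apply ContinuousOn.mul continuousOn_const
      apply ContinuousOn.div
      · exact (Real.continuous_cos.comp (continuous_const.mul continuous_id)).continuousOn
      · exact (Real.continuous_sin.comp (continuous_const.mul continuous_id)).continuousOn
      · intro x hx
        exact ne_of_gt (Real.sin_pos_of_pos_of_lt_pi (mul_pos Real.pi_pos hx.1)
          (by nlinarith [Real.pi_pos, hx.2]))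
    have hdcont : ContinuousOn hd (Ioo (0:ℝ) 1) := by
      apply ContinuousOn.add
      · exact (ContinuousOn.sub continuousOn_const (hccont.pow 2)).mul (hfc.continuousOn.pow 2)
      · exact hccont.mul (ContinuousOn.mul (continuousOn_const.mul hfc.continuousOn)
          hf'.continuousOn)
    have hdint : IntervalIntegrable hd volume δ (1 - δ) :=
      (hdcont.mono hsub).intervalIntegrable_of_Icc hδδ
    have hftc : ∫ s in δ..(1 - δ), hd s
        = cc (1 - δ) * f (1 - δ) ^ 2 - cc δ * f δ ^ 2 := by
      apply intervalIntegral.integral_eq_sub_of_hasDerivAt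
        (f := fun x => cc x * f x ^ 2) (f' := hd)
      · intro x hx
        rw [uIcc_of_le hδδ] at hx
        have hx' := hsub hx
        have h1 := hasDerivAt_cc hx'
        have h2 : HasDerivAt (fun u => f u ^ 2) (2 * f x * deriv f x) x := by
          have := (((hf.differentiable one_ne_zero) x).hasDerivAt).pow 2
          simpa [mul_comm, mul_assoc, Pi.pow_def] using this
        have := h1.mul h2
        exact this
        try ring
      · exact hdint
    have hmono : ∫ s in δ..(1 - δ), hd s ≤ ∫ s in δ..(1 - δ), G s := by
      apply intervalIntegral.integral_mono_on hδδ hdint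
        ((hGint δ (1 - δ)))
      intro x hx
      have : G x - hd x = (deriv f x - cc x * f x) ^ 2 := by
        simp only [hG, hhd]; ring
      nlinarith [sq_nonneg (deriv f x - cc x * f x)]
    have hPdiff : ∫ s in δ..(1 - δ), G s = P (1 - δ) - P δ := by
      have := intervalIntegral.integral_add_adjacent_intervals
        (hGint 0 δ) (hGint δ (1 - δ))
      simp only [hP]
      linarith [this]
    rw [hftc] at hmono
    linarith [hmono, hPdiff]
  -- limits
  have hL1 : Tendsto (fun δ => cc δ * f δ ^ 2) (𝓝[>] (0:ℝ)) (𝓝 0) :=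
    tendsto_cc_sq f hf h0
  have hL2 : Tendsto (fun δ => cc (1 - δ) * f (1 - δ) ^ 2) (𝓝[>] (0:ℝ)) (𝓝 0) := by
    have hg : ContDiff ℝ 1 (fun u => f (1 - u)) :=
      hf.comp (contDiff_const.sub contDiff_id)
    have := tendsto_cc_sq (fun u => f (1 - u)) hg (by simpa using h1)
    refine (this.neg.congr (fun δ => ?_)).mono_right (by simp)
    have e1 : Real.pi * (1 - δ) = Real.pi - Real.pi * δ := by ring
    simp only [cc, e1, Real.cos_pi_sub, Real.sin_pi_sub]
    ring
  have hR : Tendsto (fun δ => P (1 - δ) - P δ) (𝓝[>] (0:ℝ)) (𝓝 (P 1)) := by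
    have t1 : Tendsto (fun δ : ℝ => P (1 - δ)) (𝓝[>] (0:ℝ)) (𝓝 (P 1)) := by
      have : Continuous fun δ : ℝ => P (1 - δ) := hPc.comp (continuous_const.sub continuous_id)
      simpa using (this.tendsto 0).mono_left nhdsWithin_le_nhds
    have t2 : Tendsto P (𝓝[>] (0:ℝ)) (𝓝 (P 0)) :=
      (hPc.tendsto 0).mono_left nhdsWithin_le_nhds
    have hP0 : P 0 = 0 := intervalIntegral.integral_same
    simpa [hP0] using t1.sub t2
  have hfinal : (0:ℝ) ≤ P 1 := by
    have hLL : Tendsto (fun δ => cc (1 - δ) * f (1 - δ) ^ 2 - cc δ * f δ ^ 2)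
        (𝓝[>] (0:ℝ)) (𝓝 0) := by simpa using hL2.sub hL1
    have hmem : Ioo (0:ℝ) (1/2) ∈ 𝓝[>] (0:ℝ) :=
      Ioo_mem_nhdsGT_of_mem ⟨le_rfl, by norm_num⟩
    exact le_of_tendsto_of_tendsto hLL hR
      (by filter_upwards [hmem] with δ hδ using key δ hδ)
  have hsplit : P 1 = (∫ s in (0:ℝ)..1, deriv f s ^ 2)
      - Real.pi ^ 2 * ∫ s in (0:ℝ)..1, f s ^ 2 := by
    simp only [hP, hG]
    rw [intervalIntegral.integral_sub (f := fun s => deriv f s ^ 2) (g := fun s => Real.pi ^ 2 * f s ^ 2) ((hf'.pow 2).intervalIntegrable 0 1)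
      (((continuous_const.mul (hfc.pow 2))).intervalIntegrable 0 1),
      intervalIntegral.integral_const_mul]
  rw [hsplit] at hfinal
  linarith [hfinal]

theorem wirtinger_vec (g : ℝ → E3) (hg : ContDiff ℝ 1 g) (h0 : g 0 = 0) (h1 : g 1 = 0) :
    Real.pi ^ 2 * ∫ s in (0:ℝ)..1, ‖g s‖ ^ 2 ≤ ∫ s in (0:ℝ)..1, ‖deriv g s‖ ^ 2 := by
  have hgc : Continuous g := hg.continuous
  have hg' : Continuous (deriv g) := hg.continuous_deriv le_rfl
  have hcoord : ∀ i : Fin 3, ContDiff ℝ 1 (fun s => g s i) := fun i =>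
    (ContinuousLinearMap.contDiff (EuclideanSpace.proj (𝕜 := ℝ) i)).comp hg
  have hderiv : ∀ (i : Fin 3) (s : ℝ), HasDerivAt (fun u => g u i) (deriv g s i) s := by
    intro i s
    exact (EuclideanSpace.proj (𝕜 := ℝ) i).hasFDerivAt.comp_hasDerivAt s
      ((hg.differentiable one_ne_zero s).hasDerivAt)
  have hnorm : ∀ x : E3, ‖x‖ ^ 2 = ∑ i : Fin 3, x i ^ 2 := by
    intro x
    rw [EuclideanSpace.norm_eq]
    rw [Real.sq_sqrt (by positivity)]
    simp [Real.norm_eq_abs, sq_abs]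
  have e1 : (∫ s in (0:ℝ)..1, ‖g s‖ ^ 2) = ∑ i : Fin 3, ∫ s in (0:ℝ)..1, g s i ^ 2 := by
    rw [← intervalIntegral.integral_finset_sum]
    · congr 1; funext s; exact hnorm (g s)
    · intro i _
      exact (((hcoord i).continuous).pow 2).intervalIntegrable 0 1
  have e2 : (∫ s in (0:ℝ)..1, ‖deriv g s‖ ^ 2)
      = ∑ i : Fin 3, ∫ s in (0:ℝ)..1, deriv g s i ^ 2 := by
    rw [← intervalIntegral.integral_finset_sum]
    · congr 1; funext s; exact hnorm (deriv g s)
    · intro i _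
      have : Continuous fun s => deriv g s i :=
        (EuclideanSpace.proj (𝕜 := ℝ) i).continuous.comp hg'
      exact (this.pow 2).intervalIntegrable 0 1
  rw [e1, e2, Finset.mul_sum]
  apply Finset.sum_le_sum
  intro i _
  have hw := wirtinger (fun s => g s i) (hcoord i)
    (by simp [h0]) (by simp [h1])
  have e3 : ∀ s, deriv (fun u => g u i) s = deriv g s i := fun s => (hderiv i s).deriv
  simp only [e3] at hw
  exact hw

theorem wirtinger_perp (W τ : ℝ → E3) (hW : ContDiff ℝ (2:ℕ) W)
    (hτc : Continuous τ)
    (horth : ∀ s ∈ Icc (0:ℝ) 1, ⟪τ s, W s⟫ = 0)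
    (h0 : W 0 = 0) (h1 : W 1 = 0) :
    Real.pi ^ 2 * ∫ s in (0:ℝ)..1, ‖W s‖ ^ 2 ≤
      ∫ s in (0:ℝ)..1, ‖deriv W s - ⟪τ s, deriv W s⟫ • τ s‖ ^ 2 := by
  have hWc : Continuous W := hW.continuous
  have hW' : Continuous (deriv W) := hW.continuous_deriv (by norm_cast)
  set q : ℝ → ℝ := fun s => ‖deriv W s - ⟪τ s, deriv W s⟫ • τ s‖ with hq
  have hqc : Continuous q := by
    apply Continuous.norm
    apply hW'.sub
    refine Continuous.smul (f := fun s => ⟪τ s, deriv W s⟫) ?_ hτc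
    exact (continuous_inner.comp (hτc.prodMk hW' : Continuous fun s => (τ s, deriv W s)))
  obtain ⟨M, hM⟩ : ∃ M : ℝ, M = ∫ s in (0:ℝ)..1, ‖W s‖ := ⟨_, rfl⟩
  have hM0 : 0 ≤ M := by
    rw [hM]
    exact intervalIntegral.integral_nonneg (by norm_num) (fun s _ => norm_nonneg _)
  obtain ⟨C, hC⟩ : ∃ C : ℝ, C = Real.pi ^ 2 * (2 * (M + 1) + 1) := ⟨_, rfl⟩
  have hC0 : 0 < C := by rw [hC]; positivity
  -- main estimate for each ε ∈ (0,1]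
  have main : ∀ ε : ℝ, 0 < ε → ε ≤ 1 →
      Real.pi ^ 2 * (∫ s in (0:ℝ)..1, ‖W s‖ ^ 2) ≤ (∫ s in (0:ℝ)..1, q s ^ 2) + C * ε := by
    intro ε hε hε1
    set g : ℝ → ℝ := fun s => Real.sqrt (‖W s‖ ^ 2 + ε ^ 2) - ε with hgdef
    have hpos : ∀ s, 0 < ‖W s‖ ^ 2 + ε ^ 2 := fun s => by positivity
    have hgC : ContDiff ℝ 1 g := by
      apply ContDiff.sub ?_ contDiff_const
      exact (((hW.norm_sq ℝ).add contDiff_const).of_le (by norm_cast)).sqrt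
        (fun s => ne_of_gt (hpos s))
    have hg0 : g 0 = 0 := by
      simp [hgdef, h0, Real.sqrt_sq hε.le]
    have hg1 : g 1 = 0 := by
      simp [hgdef, h1, Real.sqrt_sq hε.le]
    have hgderiv : ∀ s, HasDerivAt g
        (⟪W s, deriv W s⟫ / Real.sqrt (‖W s‖ ^ 2 + ε ^ 2)) s := by
      intro s
      have hWd : HasDerivAt W (deriv W s) s :=
        ((hW.differentiable (by norm_cast)) s).hasDerivAt
      have hin : HasDerivAt (fun u => ⟪W u, W u⟫ + ε ^ 2) (2 * ⟪W s, deriv W s⟫) s := by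
        have := (hWd.inner ℝ hWd).add_const (ε ^ 2)
        refine this.congr_deriv ?_
        rw [real_inner_comm (deriv W s) (W s)]; ring
      have hsq : (fun u => ⟪W u, W u⟫ + ε ^ 2) = fun u => ‖W u‖ ^ 2 + ε ^ 2 := by
        funext u; rw [real_inner_self_eq_norm_sq]
      rw [hsq] at hin
      have := (hin.sqrt (ne_of_gt (hpos s))).sub_const ε
      refine this.congr_deriv ?_
      field_simp
    -- pointwise bound on [0,1]
    have hptw : ∀ s ∈ Icc (0:ℝ) 1, deriv g s ^ 2 ≤ q s ^ 2 := by
      intro s hs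
      rw [(hgderiv s).deriv]
      set D := Real.sqrt (‖W s‖ ^ 2 + ε ^ 2) with hD
      have hD0 : 0 < D := Real.sqrt_pos.2 (hpos s)
      have hDW : ‖W s‖ ≤ D := by
        have h2 := Real.sqrt_le_sqrt (show ‖W s‖ ^ 2 ≤ ‖W s‖ ^ 2 + ε ^ 2 by nlinarith)
        rwa [Real.sqrt_sq (norm_nonneg _)] at h2
      set a : ℝ := ⟪W s, deriv W s⟫ with ha
      have horthW : ⟪W s, τ s⟫ = 0 := by
        rw [real_inner_comm]; exact horth s hs
      have hrepr : a = ⟪W s, deriv W s - ⟪τ s, deriv W s⟫ • τ s⟫ := by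
        rw [inner_sub_right, real_inner_smul_right, horthW]
        ring
      have habs : |a| ≤ ‖W s‖ * q s := by
        rw [hrepr]
        exact abs_real_inner_le_norm _ _
      have hq0 : 0 ≤ q s := norm_nonneg _
      have h9 : |a| ≤ D * q s := le_trans habs (mul_le_mul_of_nonneg_right hDW hq0)
      have hkey : a ^ 2 ≤ D ^ 2 * q s ^ 2 := by
        have h10 : |a| ^ 2 ≤ (D * q s) ^ 2 := pow_le_pow_left₀ (abs_nonneg a) h9 2
        rw [sq_abs] at h10
        calc a ^ 2 ≤ (D * q s) ^ 2 := h10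
          _ = D ^ 2 * q s ^ 2 := by ring
      rw [div_pow, div_le_iff₀ (by positivity)]
      linarith [hkey]
    -- assemble
    have hgcont : Continuous g := hgC.continuous
    have hg'c : Continuous (deriv g) := hgC.continuous_deriv le_rfl
    have hw := wirtinger g hgC hg0 hg1
    have h2 : (∫ s in (0:ℝ)..1, deriv g s ^ 2) ≤ ∫ s in (0:ℝ)..1, q s ^ 2 := by
      apply intervalIntegral.integral_mono_on (by norm_num)
        ((hg'c.pow 2).intervalIntegrable 0 1) ((hqc.pow 2).intervalIntegrable 0 1) hptw
    have hgW : ∀ s : ℝ, g s ≤ ‖W s‖ := by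
      intro s
      have h3 : Real.sqrt (‖W s‖ ^ 2 + ε ^ 2) ≤ ‖W s‖ + ε := by
        have h4 := Real.sqrt_le_sqrt (show ‖W s‖ ^ 2 + ε ^ 2 ≤ (‖W s‖ + ε) ^ 2 by
          nlinarith [norm_nonneg (W s), hε.le])
        rwa [Real.sqrt_sq (by positivity)] at h4
      simp only [hgdef]
      linarith
    have hg0' : ∀ s : ℝ, 0 ≤ g s := by
      intro s
      have h3 : ε = Real.sqrt (ε ^ 2) := (Real.sqrt_sq hε.le).symm
      simp only [hgdef]
      have h4 := Real.sqrt_le_sqrt (show ε ^ 2 ≤ ‖W s‖ ^ 2 + ε ^ 2 by nlinarith [sq_nonneg ‖W s‖])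
      rw [Real.sqrt_sq hε.le] at h4
      linarith
    have hgM : (∫ s in (0:ℝ)..1, g s) ≤ M := by
      rw [hM]
      apply intervalIntegral.integral_mono_on (by norm_num)
        (hgcont.intervalIntegrable 0 1) (hWc.norm.intervalIntegrable 0 1)
      exact fun s _ => hgW s
    have hgI0 : (0:ℝ) ≤ ∫ s in (0:ℝ)..1, g s :=
      intervalIntegral.integral_nonneg (by norm_num) (fun s _ => hg0' s)
    have hsum : (∫ s in (0:ℝ)..1, (g s + ε) ^ 2)
        = (∫ s in (0:ℝ)..1, g s ^ 2) + (2 * ε * ∫ s in (0:ℝ)..1, g s) + ε ^ 2 := by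
      have he : (fun s => (g s + ε) ^ 2) = fun s => g s ^ 2 + ((2 * ε) * g s + ε ^ 2) := by
        funext s; ring
      rw [he, intervalIntegral.integral_add (f := fun s => g s ^ 2) (g := fun s => 2 * ε * g s + ε ^ 2) ((hgcont.pow 2).intervalIntegrable 0 1)
        (((continuous_const.mul hgcont).add continuous_const).intervalIntegrable 0 1),
        intervalIntegral.integral_add (f := fun s => 2 * ε * g s) (g := fun _ => ε ^ 2) ((continuous_const.mul hgcont).intervalIntegrable 0 1)
        (continuous_const.intervalIntegrable 0 1),
        intervalIntegral.integral_const_mul, intervalIntegral.integral_const]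
      simp
      ring
    have hWg : (∫ s in (0:ℝ)..1, ‖W s‖ ^ 2) ≤ ∫ s in (0:ℝ)..1, (g s + ε) ^ 2 := by
      apply intervalIntegral.integral_mono_on (by norm_num)
        ((hWc.norm.pow 2).intervalIntegrable 0 1)
        (((hgcont.add continuous_const).pow 2).intervalIntegrable 0 1)
      intro s _
      have : (g s + ε) ^ 2 = ‖W s‖ ^ 2 + ε ^ 2 := by
        simp only [hgdef, sub_add_cancel]
        exact Real.sq_sqrt (hpos s).le
      simp only [Pi.add_apply, Pi.pow_apply]
      nlinarith [sq_nonneg ε]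
    have hpi : (0:ℝ) < Real.pi ^ 2 := by positivity
    have hfin : Real.pi ^ 2 * (2 * ε * (∫ s in (0:ℝ)..1, g s) + ε ^ 2) ≤ C * ε := by
      have h5 : 2 * ε * (∫ s in (0:ℝ)..1, g s) ≤ 2 * ε * (M + 1) :=
        mul_le_mul_of_nonneg_left (le_trans hgM (by linarith)) (by positivity)
      have h6 : ε ^ 2 ≤ ε := by nlinarith
      calc Real.pi ^ 2 * (2 * ε * (∫ s in (0:ℝ)..1, g s) + ε ^ 2)
          ≤ Real.pi ^ 2 * (2 * ε * (M + 1) + ε) :=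
            mul_le_mul_of_nonneg_left (by linarith) hpi.le
        _ = C * ε := by rw [hC]; ring
    have hA := mul_le_mul_of_nonneg_left hWg hpi.le
    have hdist : Real.pi ^ 2 * (∫ s in (0:ℝ)..1, (g s + ε) ^ 2)
        = Real.pi ^ 2 * (∫ s in (0:ℝ)..1, g s ^ 2)
          + Real.pi ^ 2 * (2 * ε * (∫ s in (0:ℝ)..1, g s) + ε ^ 2) := by
      rw [hsum]; ring
    linarith [hA, hdist, hw, h2, hfin]
  -- take ε → 0
  apply le_of_forall_pos_le_add
  intro η hη
  have hε0 : 0 < min 1 (η / C) := lt_min one_pos (div_pos hη hC0)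
  have h7 := main (min 1 (η / C)) hε0 (min_le_left _ _)
  have h8 : C * min 1 (η / C) ≤ η := by
    have := min_le_right 1 (η / C)
    calc C * min 1 (η / C) ≤ C * (η / C) := by
          apply mul_le_mul_of_nonneg_left this hC0.le
      _ = η := by field_simp
  linarith

-- sections of smooth functions
theorem contDiff_sec1 (f : ℝ → ℝ → V) (hf : ContDiff ℝ (⊤:ℕ∞) (Function.uncurry f)) (t : ℝ) :
    ContDiff ℝ (⊤:ℕ∞) (fun s => f s t) :=
  hf.comp (contDiff_id.prodMk contDiff_const)

theorem contDiff_sec2 (f : ℝ → ℝ → V) (hf : ContDiff ℝ (⊤:ℕ∞) (Function.uncurry f)) (s : ℝ) :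
    ContDiff ℝ (⊤:ℕ∞) (fun t => f s t) :=
  hf.comp (contDiff_const.prodMk contDiff_id)

theorem hasDerivAt_sec1 (f : ℝ → ℝ → V) (hf : ContDiff ℝ (⊤:ℕ∞) (Function.uncurry f))
    (t : ℝ) (s : ℝ) : HasDerivAt (fun u => f u t) (pd1 f s t) s :=
  (((contDiff_sec1 f hf t).differentiable (by simp)) s).hasDerivAt

theorem hasDerivAt_sec2 (f : ℝ → ℝ → V) (hf : ContDiff ℝ (⊤:ℕ∞) (Function.uncurry f))
    (s : ℝ) (t : ℝ) : HasDerivAt (fun u => f s u) (pd2 f s t) t :=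
  (((contDiff_sec2 f hf s).differentiable (by simp)) t).hasDerivAt

theorem continuous_sec1 (f : ℝ → ℝ → V) (hf : ContDiff ℝ (⊤:ℕ∞) (Function.uncurry f))
    (t : ℝ) : Continuous (fun s => f s t) := (contDiff_sec1 f hf t).continuous

-- integration by parts with vanishing boundary contribution
theorem ibp_zero (a b a' b' : ℝ → E3)
    (hA : ∀ s, HasDerivAt a (a' s) s) (hB : ∀ s, HasDerivAt b (b' s) s)
    (ca : Continuous a) (cb : Continuous b) (ca' : Continuous a') (cb' : Continuous b')
    (hbdry : ⟪a 0, b 0⟫ = ⟪a 1, b 1⟫) :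
    ∫ s in (0:ℝ)..1, ⟪a s, b' s⟫ = - ∫ s in (0:ℝ)..1, ⟪a' s, b s⟫ := by
  have hint1 : IntervalIntegrable (fun s => ⟪a s, b' s⟫) volume 0 1 :=
    (ca.inner cb').intervalIntegrable 0 1
  have hint2 : IntervalIntegrable (fun s => ⟪a' s, b s⟫) volume 0 1 :=
    (ca'.inner cb).intervalIntegrable 0 1
  have hftc : ∫ s in (0:ℝ)..1, (⟪a s, b' s⟫ + ⟪a' s, b s⟫) = ⟪a 1, b 1⟫ - ⟪a 0, b 0⟫ := by
    apply intervalIntegral.integral_eq_sub_of_hasDerivAt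
      (f := fun s => ⟪a s, b s⟫)
    · intro x _
      exact (hA x).inner ℝ (hB x)
    · exact (hint1.add hint2)
  rw [intervalIntegral.integral_add hint1 hint2] at hftc
  rw [hbdry] at hftc
  linarith [hftc]

end FEED

end FEEDAux

open FEED

set_option maxHeartbeats 1000000 in
/-- exponential decay of the bending energy for the free-end
elastohydrodynamic curve evolution. -/

theorem free_end_energy_decay (γ T : ℝ) (hγ : 0 ≤ γ) (hT : 0 < T)
    (X : ℝ → ℝ → E3) (lam : ℝ → ℝ → ℝ) (Z : ℝ → ℝ → E3)
    (hX : ContDiff ℝ (⊤ : ℕ∞) (Function.uncurry X))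
    (hlam : ContDiff ℝ (⊤ : ℕ∞) (Function.uncurry lam))
    (hinext : ∀ s ∈ Icc (0:ℝ) 1, ∀ t ∈ Icc (0:ℝ) T, ‖deriv (fun u => X u t) s‖ = 1)
    (hZ : ∀ s t, Z s t =
      iteratedDeriv 3 (fun u => X u t) s - lam s t • deriv (fun u => X u t) s)
    (hPDE : ∀ s ∈ Icc (0:ℝ) 1, ∀ t ∈ Icc (0:ℝ) T,
      deriv (X s) t =
        -(deriv (fun u => Z u t) s
          + (γ * ⟪deriv (fun u => X u t) s, deriv (fun u => Z u t) s⟫)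
              • deriv (fun u => X u t) s))
    (hbc2a : ∀ t ∈ Icc (0:ℝ) T, iteratedDeriv 2 (fun u => X u t) 0 = 0)
    (hbc2b : ∀ t ∈ Icc (0:ℝ) T, iteratedDeriv 2 (fun u => X u t) 1 = 0)
    (hbc3a : ∀ t ∈ Icc (0:ℝ) T, iteratedDeriv 3 (fun u => X u t) 0 = 0)
    (hbc3b : ∀ t ∈ Icc (0:ℝ) T, iteratedDeriv 3 (fun u => X u t) 1 = 0)
    (hbcl0 : ∀ t ∈ Icc (0:ℝ) T, lam 0 t = 0)
    (hbcl1 : ∀ t ∈ Icc (0:ℝ) T, lam 1 t = 0) :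
    ∀ t ∈ Icc (0:ℝ) T,
      (1/2) * ∫ s in (0:ℝ)..1, ‖iteratedDeriv 2 (fun u => X u t) s‖ ^ 2 ≤
        Real.exp (-(2 * Real.pi ^ 4) * t) *
          ((1/2) * ∫ s in (0:ℝ)..1, ‖iteratedDeriv 2 (fun u => X u 0) s‖ ^ 2) := by
  -- notation
  set X1 := pd1 X with hX1
  set X2 := pd1 X1 with hX2
  set X3 := pd1 X2 with hX3
  set V := pd2 X with hV
  set Z1 := pd1 Z with hZ1
  have hX1s : ContDiff ℝ (⊤:ℕ∞) (Function.uncurry X1) := contDiff_pd1 X hX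
  have hX2s : ContDiff ℝ (⊤:ℕ∞) (Function.uncurry X2) := contDiff_pd1 X1 hX1s
  have hX3s : ContDiff ℝ (⊤:ℕ∞) (Function.uncurry X3) := contDiff_pd1 X2 hX2s
  have hVs : ContDiff ℝ (⊤:ℕ∞) (Function.uncurry V) := contDiff_pd2 X hX
  -- iterated derivatives as pd1 iterates
  have itd2 : ∀ t s, iteratedDeriv 2 (fun u => X u t) s = X2 s t := by
    intro t s
    rw [iteratedDeriv_succ, iteratedDeriv_one]
    rfl
  have itd3 : ∀ t s, iteratedDeriv 3 (fun u => X u t) s = X3 s t := by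
    intro t s
    rw [iteratedDeriv_succ, iteratedDeriv_succ, iteratedDeriv_one]
    rfl
  -- Z in terms of X
  have hZeq : ∀ s t, Z s t = X3 s t - lam s t • X1 s t := by
    intro s t
    rw [hZ s t, itd3 t s]
    rfl
  have hZs : ContDiff ℝ (⊤:ℕ∞) (Function.uncurry Z) := by
    have : Function.uncurry Z = fun p : ℝ × ℝ =>
        Function.uncurry X3 p - Function.uncurry lam p • Function.uncurry X1 p := by
      funext p
      exact hZeq p.1 p.2
    rw [this]
    exact hX3s.sub (hlam.smul hX1s)
  have hZ1s : ContDiff ℝ (⊤:ℕ∞) (Function.uncurry Z1) := contDiff_pd1 Z hZs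
  -- boundary values
  have hX2bdry0 : ∀ t ∈ Icc (0:ℝ) T, X2 0 t = 0 := by
    intro t ht
    rw [← itd2 t 0]; exact hbc2a t ht
  have hX2bdry1 : ∀ t ∈ Icc (0:ℝ) T, X2 1 t = 0 := by
    intro t ht
    rw [← itd2 t 1]; exact hbc2b t ht
  have hZbdry0 : ∀ t ∈ Icc (0:ℝ) T, Z 0 t = 0 := by
    intro t ht
    rw [hZeq, hbcl0 t ht, ← itd3 t 0, hbc3a t ht]
    simp
  have hZbdry1 : ∀ t ∈ Icc (0:ℝ) T, Z 1 t = 0 := by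
    intro t ht
    rw [hZeq, hbcl1 t ht, ← itd3 t 1, hbc3b t ht]
    simp
  -- unit tangent facts
  have hunit : ∀ s ∈ Icc (0:ℝ) 1, ∀ t ∈ Icc (0:ℝ) T, ⟪X1 s t, X1 s t⟫ = 1 := by
    intro s hs t ht
    have := hinext s hs t ht
    rw [real_inner_self_eq_norm_sq]
    rw [show deriv (fun u => X u t) s = X1 s t from rfl] at this
    rw [this]; norm_num
  -- ⟪X1, X2⟫ = 0 on the rectangle
  have horth12 : ∀ t ∈ Icc (0:ℝ) T, ∀ s ∈ Icc (0:ℝ) 1, ⟪X1 s t, X2 s t⟫ = 0 := by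
    intro t ht
    have hcont : Continuous fun s => ⟪X1 s t, X2 s t⟫ :=
      (continuous_sec1 X1 hX1s t).inner (continuous_sec1 X2 hX2s t)
    have hopen : ∀ s ∈ Ioo (0:ℝ) 1, ⟪X1 s t, X2 s t⟫ = 0 := by
      intro s hs
      have hder : HasDerivAt (fun u => ⟪X1 u t, X1 u t⟫) (2 * ⟪X1 s t, X2 s t⟫) s := by
        have h := (hasDerivAt_sec1 X1 hX1s t s).inner ℝ (hasDerivAt_sec1 X1 hX1s t s)
        refine h.congr_deriv ?_
        rw [real_inner_comm (X2 s t) (X1 s t)]; ring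
      have hconst : (fun u => ⟪X1 u t, X1 u t⟫) =ᶠ[𝓝 s] fun _ => (1:ℝ) := by
        filter_upwards [Ioo_mem_nhds hs.1 hs.2] with u hu
        exact hunit u ⟨hu.1.le, hu.2.le⟩ t ht
      have hder0 : HasDerivAt (fun u => ⟪X1 u t, X1 u t⟫) 0 s := by
        exact (hasDerivAt_const s (1:ℝ)).congr_of_eventuallyEq hconst
      have := hder.unique hder0
      linarith
    have hEq : EqOn (fun s => ⟪X1 s t, X2 s t⟫) (fun _ => (0:ℝ)) (closure (Ioo (0:ℝ) 1)) :=
      Set.EqOn.closure (fun s hs => hopen s hs) hcont continuous_const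
    intro s hs
    have := hEq (by rw [closure_Ioo (by norm_num : (0:ℝ) ≠ 1)]; exact hs)
    simpa using this
  -- ⟪X1, pd2 X1⟫ = 0 on the rectangle
  have horth1t : ∀ s ∈ Icc (0:ℝ) 1, ∀ t ∈ Icc (0:ℝ) T, ⟪X1 s t, pd2 X1 s t⟫ = 0 := by
    intro s hs
    have hcont : Continuous fun t => ⟪X1 s t, pd2 X1 s t⟫ :=
      (contDiff_sec2 X1 hX1s s).continuous.inner (contDiff_sec2 (pd2 X1) (contDiff_pd2 X1 hX1s) s).continuous
    have hopen : ∀ t ∈ Ioo (0:ℝ) T, ⟪X1 s t, pd2 X1 s t⟫ = 0 := by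
      intro t ht
      have hder : HasDerivAt (fun v => ⟪X1 s v, X1 s v⟫) (2 * ⟪X1 s t, pd2 X1 s t⟫) t := by
        have h := (hasDerivAt_sec2 X1 hX1s s t).inner ℝ (hasDerivAt_sec2 X1 hX1s s t)
        refine h.congr_deriv ?_
        rw [real_inner_comm (pd2 X1 s t) (X1 s t)]; ring
      have hconst : (fun v => ⟪X1 s v, X1 s v⟫) =ᶠ[𝓝 t] fun _ => (1:ℝ) := by
        filter_upwards [Ioo_mem_nhds ht.1 ht.2] with v hv
        exact hunit s hs v ⟨hv.1.le, hv.2.le⟩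
      have hder0 : HasDerivAt (fun v => ⟪X1 s v, X1 s v⟫) 0 t :=
        (hasDerivAt_const t (1:ℝ)).congr_of_eventuallyEq hconst
      have := hder.unique hder0
      linarith
    have hEq : EqOn (fun t => ⟪X1 s t, pd2 X1 s t⟫) (fun _ => (0:ℝ)) (closure (Ioo (0:ℝ) T)) :=
      Set.EqOn.closure (fun t ht => hopen t ht) hcont continuous_const
    intro t ht
    have := hEq (by rw [closure_Ioo hT.ne]; exact ht)
    simpa using this
  -- commuting derivatives
  have hcomm1 : pd1 V = pd2 X1 := clairaut X hX
  have hcomm2 : pd2 X2 = pd1 (pd1 V) := by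
    have h1 : pd1 (pd2 X1) = pd2 X2 := clairaut X1 hX1s
    rw [← h1, ← hcomm1]
  -- PDE in pd notation
  have hPDE' : ∀ s ∈ Icc (0:ℝ) 1, ∀ t ∈ Icc (0:ℝ) T,
      V s t = -(Z1 s t + (γ * ⟪X1 s t, Z1 s t⟫) • X1 s t) := by
    intro s hs t ht
    exact hPDE s hs t ht
  -- the energy functional (written with inner products)
  obtain ⟨FF, hFF⟩ : ∃ FF : ℝ → ℝ, FF = fun t => ∫ s in (0:ℝ)..1, ⟪X2 s t, X2 s t⟫ := ⟨_, rfl⟩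
  obtain ⟨DD, hDD⟩ : ∃ DD : ℝ → ℝ,
      DD = fun t => ∫ s in (0:ℝ)..1, 2 * ⟪X2 s t, pd2 X2 s t⟫ := ⟨_, rfl⟩
  have hX2c : Continuous (Function.uncurry X2) := hX2s.continuous
  have hpd2X2s : ContDiff ℝ (⊤:ℕ∞) (Function.uncurry (pd2 X2)) := contDiff_pd2 X2 hX2s
  have hintegrand_cont : Continuous fun p : ℝ × ℝ => 2 * ⟪X2 p.1 p.2, pd2 X2 p.1 p.2⟫ := by
    apply continuous_const.mul
    exact (hX2c.inner hpd2X2s.continuous)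
  -- differentiation under the integral sign
  have hFFderiv : ∀ t₀ : ℝ, HasDerivAt FF (DD t₀) t₀ := by
    intro t₀
    have hcn : Continuous fun p : ℝ × ℝ => ‖2 * ⟪X2 p.1 p.2, pd2 X2 p.1 p.2⟫‖ :=
      hintegrand_cont.norm
    obtain ⟨B, hB⟩ : ∃ B : ℝ, ∀ p ∈ Icc (0:ℝ) 1 ×ˢ Icc (t₀-1) (t₀+1),
        ‖2 * ⟪X2 p.1 p.2, pd2 X2 p.1 p.2⟫‖ ≤ B := by
      obtain ⟨q₀, _, hq₀⟩ :=
        (isCompact_Icc.prod (isCompact_Icc (a := t₀-1) (b := t₀+1))).exists_isMaxOn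
        ⟨((0:ℝ), t₀), (show ((0:ℝ), t₀) ∈ Icc (0:ℝ) 1 ×ˢ Icc (t₀-1) (t₀+1) from
          ⟨by norm_num, by rw [Set.mem_Icc]; constructor <;> linarith⟩)⟩
        hcn.continuousOn
      exact ⟨_, fun p hp => hq₀ hp⟩
    have key := intervalIntegral.hasDerivAt_integral_of_dominated_loc_of_deriv_le
      (F := fun t s => ⟪X2 s t, X2 s t⟫) (F' := fun t s => 2 * ⟪X2 s t, pd2 X2 s t⟫)
      (x₀ := t₀) (s := Metric.ball t₀ 1) (a := 0) (b := 1) (bound := fun _ => B) (μ := volume)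
      (Metric.ball_mem_nhds t₀ one_pos) ?_ ?_ ?_ ?_ ?_ ?_
    · rw [hFF, hDD]
      exact key.2
    · filter_upwards with x
      exact (Continuous.aestronglyMeasurable (by
        exact ((continuous_sec1 X2 hX2s x).inner (continuous_sec1 X2 hX2s x))))
    · exact ((continuous_sec1 X2 hX2s t₀).inner (continuous_sec1 X2 hX2s t₀)).intervalIntegrable 0 1
    · exact (Continuous.aestronglyMeasurable (by
        exact continuous_const.mul ((continuous_sec1 X2 hX2s t₀).inner
          (continuous_sec1 (pd2 X2) hpd2X2s t₀))))
    · apply ae_of_all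
      intro s hs x hx
      apply hB (s, x)
      constructor
      · exact ⟨le_of_lt (Set.mem_Ioc.1 (by simpa [Set.uIoc_of_le (by norm_num : (0:ℝ) ≤ 1)] using hs)).1,
          (Set.mem_Ioc.1 (by simpa [Set.uIoc_of_le (by norm_num : (0:ℝ) ≤ 1)] using hs)).2⟩
      · have := Real.ball_eq_Ioo t₀ 1 ▸ hx
        exact ⟨by simpa using (Set.mem_Ioo.1 this).1.le, by simpa using (Set.mem_Ioo.1 this).2.le⟩
    · exact intervalIntegrable_const
    · apply ae_of_all
      intro s _ x _
      show HasDerivAt (fun v => ⟪X2 s v, X2 s v⟫) (2 * ⟪X2 s x, pd2 X2 s x⟫) x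
      have h := (hasDerivAt_sec2 X2 hX2s s x).inner ℝ (hasDerivAt_sec2 X2 hX2s s x)
      have hcm := real_inner_comm (pd2 X2 s x) (X2 s x)
      refine h.congr_deriv ?_
      linarith [hcm]
  -- FF is the squared-norm energy
  have hFFnorm : ∀ t, FF t = ∫ s in (0:ℝ)..1, ‖X2 s t‖ ^ 2 := by
    intro t
    rw [hFF]
    apply intervalIntegral.integral_congr
    intro s _
    exact real_inner_self_eq_norm_sq _
  -- the differential inequality
  have hDer : ∀ t ∈ Icc (0:ℝ) T, DD t ≤ -(2 * Real.pi ^ 4) * FF t := by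
    intro t ht
    -- Step 1: first integration by parts
    have E1 : (∫ s in (0:ℝ)..1, ⟪X2 s t, pd2 X2 s t⟫)
        = - ∫ s in (0:ℝ)..1, ⟪X3 s t, pd1 V s t⟫ := by
      have := ibp_zero (fun s => X2 s t) (fun s => pd1 V s t)
        (fun s => X3 s t) (fun s => pd1 (pd1 V) s t)
        (hasDerivAt_sec1 X2 hX2s t)
        (hasDerivAt_sec1 (pd1 V) (contDiff_pd1 V hVs) t)
        (continuous_sec1 X2 hX2s t)
        (continuous_sec1 (pd1 V) (contDiff_pd1 V hVs) t)
        (continuous_sec1 X3 hX3s t)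
        (continuous_sec1 (pd1 (pd1 V)) (contDiff_pd1 (pd1 V) (contDiff_pd1 V hVs)) t)
        (by simp [hX2bdry0 t ht, hX2bdry1 t ht])
      rw [← this]
      apply intervalIntegral.integral_congr
      intro s _
      rw [hcomm2]
    -- Step 2: drop the tangential part
    have E2 : (∫ s in (0:ℝ)..1, ⟪X3 s t, pd1 V s t⟫)
        = ∫ s in (0:ℝ)..1, ⟪Z s t, pd1 V s t⟫ := by
      apply intervalIntegral.integral_congr
      intro s hs
      dsimp only
      rw [uIcc_of_le (by norm_num : (0:ℝ) ≤ 1)] at hs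
      have h1 : Z s t = X3 s t - lam s t • X1 s t := hZeq s t
      have h2 : ⟪X1 s t, pd1 V s t⟫ = 0 := by
        rw [hcomm1]
        exact horth1t s hs t ht
      rw [h1, inner_sub_left, real_inner_smul_left, h2]
      ring
    -- Step 3: second integration by parts
    have E3 : (∫ s in (0:ℝ)..1, ⟪Z s t, pd1 V s t⟫)
        = - ∫ s in (0:ℝ)..1, ⟪Z1 s t, V s t⟫ := by
      exact ibp_zero (fun s => Z s t) (fun s => V s t)
        (fun s => Z1 s t) (fun s => pd1 V s t)
        (hasDerivAt_sec1 Z hZs t)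
        (hasDerivAt_sec1 V hVs t)
        (continuous_sec1 Z hZs t)
        (continuous_sec1 V hVs t)
        (continuous_sec1 Z1 hZ1s t)
        (continuous_sec1 (pd1 V) (contDiff_pd1 V hVs) t)
        (by simp [hZbdry0 t ht, hZbdry1 t ht])
    -- Step 4: substitute the PDE
    have E4 : (∫ s in (0:ℝ)..1, ⟪Z1 s t, V s t⟫)
        = ∫ s in (0:ℝ)..1, -(‖Z1 s t‖ ^ 2 + γ * ⟪X1 s t, Z1 s t⟫ ^ 2) := by
      apply intervalIntegral.integral_congr
      intro s hs
      dsimp only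
      rw [uIcc_of_le (by norm_num : (0:ℝ) ≤ 1)] at hs
      rw [hPDE' s hs t ht, inner_neg_right, inner_add_right, real_inner_smul_right,
        real_inner_self_eq_norm_sq, real_inner_comm (Z1 s t) (X1 s t)]
      ring
    -- Step 5: keep only the coercive part
    have hZ1cont : Continuous fun s => Z1 s t := continuous_sec1 Z1 hZ1s t
    have hX1cont : Continuous fun s => X1 s t := continuous_sec1 X1 hX1s t
    have E5 : (∫ s in (0:ℝ)..1, -(‖Z1 s t‖ ^ 2 + γ * ⟪X1 s t, Z1 s t⟫ ^ 2))
        ≤ - ∫ s in (0:ℝ)..1, ‖Z1 s t‖ ^ 2 := by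
      rw [intervalIntegral.integral_neg, neg_le_neg_iff]
      apply intervalIntegral.integral_mono_on (by norm_num)
        ((hZ1cont.norm.pow 2).intervalIntegrable 0 1)
        (((hZ1cont.norm.pow 2).add ((continuous_const.mul
          ((hX1cont.inner hZ1cont).pow 2)))).intervalIntegrable 0 1)
      intro s _
      have : 0 ≤ γ * ⟪X1 s t, Z1 s t⟫ ^ 2 := mul_nonneg hγ (sq_nonneg _)
      simp only [Pi.add_apply, Pi.pow_apply, Pi.mul_apply]
      linarith
    -- Step 6: Wirtinger chain
    have hZsec : ContDiff ℝ 1 (fun s => Z s t) := (contDiff_sec1 Z hZs t).of_le (by norm_cast)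
    have W1 : Real.pi ^ 2 * (∫ s in (0:ℝ)..1, ‖Z s t‖ ^ 2)
        ≤ ∫ s in (0:ℝ)..1, ‖Z1 s t‖ ^ 2 := by
      have hder : ∀ s, deriv (fun u => Z u t) s = Z1 s t := fun s => rfl
      have := wirtinger_vec (fun s => Z s t) hZsec (hZbdry0 t ht) (hZbdry1 t ht)
      simpa only [hder] using this
    obtain ⟨q, hqdef⟩ : ∃ q : ℝ → ℝ,
        q = fun s => ‖X3 s t - ⟪X1 s t, X3 s t⟫ • X1 s t‖ := ⟨_, rfl⟩
    have hqcont : Continuous q := by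
      rw [hqdef]
      exact ((continuous_sec1 X3 hX3s t).sub
        (Continuous.smul (f := fun s => ⟪X1 s t, X3 s t⟫) ((hX1cont.inner (continuous_sec1 X3 hX3s t))) hX1cont)).norm
    have W2 : (∫ s in (0:ℝ)..1, q s ^ 2) ≤ ∫ s in (0:ℝ)..1, ‖Z s t‖ ^ 2 := by
      apply intervalIntegral.integral_mono_on (by norm_num)
        ((hqcont.pow 2).intervalIntegrable 0 1)
        (((continuous_sec1 Z hZs t).norm.pow 2).intervalIntegrable 0 1)
      intro s hs
      simp only [Pi.pow_apply]
      rw [hqdef, hZeq s t]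
      set τ := X1 s t
      set v := X3 s t
      set c := lam s t
      set d : ℝ := ⟪τ, v⟫ with hd
      have hττ : ⟪τ, τ⟫ = 1 := hunit s hs t ht
      have hτ1 : ‖τ‖ = 1 := by
        have := real_inner_self_eq_norm_sq τ
        nlinarith [norm_nonneg τ]
      have hd' : d = ⟪v, τ⟫ := by rw [hd, real_inner_comm]
      have h1 : ‖v - c • τ‖ ^ 2 = ‖v‖ ^ 2 - 2 * c * d + c ^ 2 := by
        rw [norm_sub_sq_real, real_inner_smul_right, norm_smul, ← hd', hτ1,
          Real.norm_eq_abs, mul_one, sq_abs]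
        ring
      have h2 : ‖v - d • τ‖ ^ 2 = ‖v‖ ^ 2 - 2 * d * d + d ^ 2 := by
        rw [norm_sub_sq_real, real_inner_smul_right, norm_smul, ← hd', hτ1,
          Real.norm_eq_abs, mul_one, sq_abs]
        ring
      nlinarith [sq_nonneg (c - d)]
    have W3 : Real.pi ^ 2 * (∫ s in (0:ℝ)..1, ‖X2 s t‖ ^ 2)
        ≤ ∫ s in (0:ℝ)..1, q s ^ 2 := by
      have hder : ∀ s, deriv (fun u => X2 u t) s = X3 s t := fun s => rfl
      have := wirtinger_perp (fun s => X2 s t) (fun s => X1 s t)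
        ((contDiff_sec1 X2 hX2s t).of_le (by norm_cast))
        hX1cont
        (fun s hs => horth12 t ht s hs)
        (hX2bdry0 t ht) (hX2bdry1 t ht)
      simp only [hder] at this
      rw [hqdef]
      exact this
    -- assemble
    have hpi2 : (0:ℝ) ≤ Real.pi ^ 2 := sq_nonneg _
    have chain1 : Real.pi ^ 2 * (Real.pi ^ 2 * (∫ s in (0:ℝ)..1, ‖X2 s t‖ ^ 2))
        ≤ ∫ s in (0:ℝ)..1, ‖Z1 s t‖ ^ 2 := by
      calc Real.pi ^ 2 * (Real.pi ^ 2 * (∫ s in (0:ℝ)..1, ‖X2 s t‖ ^ 2))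
          ≤ Real.pi ^ 2 * (∫ s in (0:ℝ)..1, q s ^ 2) :=
            mul_le_mul_of_nonneg_left W3 hpi2
        _ ≤ Real.pi ^ 2 * (∫ s in (0:ℝ)..1, ‖Z s t‖ ^ 2) :=
            mul_le_mul_of_nonneg_left W2 hpi2
        _ ≤ ∫ s in (0:ℝ)..1, ‖Z1 s t‖ ^ 2 := W1
    have hDDval : DD t = 2 * ∫ s in (0:ℝ)..1, ⟪X2 s t, pd2 X2 s t⟫ := by
      rw [hDD]
      exact intervalIntegral.integral_const_mul 2 _
    rw [hDDval, hFFnorm t]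
    have : (∫ s in (0:ℝ)..1, ⟪X2 s t, pd2 X2 s t⟫)
        ≤ - (Real.pi ^ 2 * (Real.pi ^ 2 * (∫ s in (0:ℝ)..1, ‖X2 s t‖ ^ 2))) := by
      rw [E1, E2, E3]
      have h6 : (∫ s in (0:ℝ)..1, ⟪Z1 s t, V s t⟫) ≤ - ∫ s in (0:ℝ)..1, ‖Z1 s t‖ ^ 2 := by
        rw [E4]; exact E5
      linarith [chain1, h6]
    nlinarith [this]
  -- Gronwall argument
  obtain ⟨G, hG⟩ : ∃ G : ℝ → ℝ,
      G = fun t => Real.exp ((2 * Real.pi ^ 4) * t) * FF t := ⟨_, rfl⟩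
  have hGderiv : ∀ t : ℝ, HasDerivAt G
      ((2 * Real.pi ^ 4) * Real.exp ((2 * Real.pi ^ 4) * t) * FF t
        + Real.exp ((2 * Real.pi ^ 4) * t) * DD t) t := by
    intro t
    have hexp : HasDerivAt (fun t : ℝ => Real.exp ((2 * Real.pi ^ 4) * t))
        ((2 * Real.pi ^ 4) * Real.exp ((2 * Real.pi ^ 4) * t)) t := by
      have hlin : HasDerivAt (fun t : ℝ => (2 * Real.pi ^ 4) * t) (2 * Real.pi ^ 4) t := by
        simpa using (hasDerivAt_id t).const_mul (2 * Real.pi ^ 4)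
      have h2 := (Real.hasDerivAt_exp ((2 * Real.pi ^ 4) * t)).comp t hlin
      have h3 : HasDerivAt (fun t : ℝ => Real.exp ((2 * Real.pi ^ 4) * t))
          (Real.exp ((2 * Real.pi ^ 4) * t) * (2 * Real.pi ^ 4)) t := by
        simpa [Function.comp_def] using h2
      convert h3 using 1
      ring
    rw [hG]
    exact hexp.mul (hFFderiv t)
  have hGanti : AntitoneOn G (Icc (0:ℝ) T) := by
    apply antitoneOn_of_deriv_nonpos (convex_Icc 0 T)
    · exact (fun t _ => ((hGderiv t).differentiableAt.continuousAt.continuousWithinAt))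
    · intro t ht
      exact ((hGderiv t).differentiableAt.differentiableWithinAt)
    · intro t ht
      rw [interior_Icc] at ht
      rw [(hGderiv t).deriv]
      have hd := hDer t ⟨ht.1.le, ht.2.le⟩
      have hexp0 : (0:ℝ) < Real.exp ((2 * Real.pi ^ 4) * t) := Real.exp_pos _
      have := mul_le_mul_of_nonneg_left hd hexp0.le
      nlinarith [this]
  -- conclusion
  intro t ht
  have h0T : (0:ℝ) ∈ Icc (0:ℝ) T := ⟨le_rfl, hT.le⟩
  have hGle : G t ≤ G 0 := hGanti h0T ht ht.1
  rw [hG] at hGle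
  simp only [mul_zero, Real.exp_zero, one_mul] at hGle
  have hFFle : FF t ≤ Real.exp (-(2 * Real.pi ^ 4) * t) * FF 0 := by
    have hpos : (0:ℝ) < Real.exp (-(2 * Real.pi ^ 4) * t) := Real.exp_pos _
    have h2 := mul_le_mul_of_nonneg_left hGle hpos.le
    calc FF t = Real.exp (-(2 * Real.pi ^ 4) * t)
          * (Real.exp ((2 * Real.pi ^ 4) * t) * FF t) := by
            rw [← mul_assoc, ← Real.exp_add]
            ring_nf
            simp
      _ ≤ Real.exp (-(2 * Real.pi ^ 4) * t) * FF 0 := h2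
  have hIF : ∀ t' : ℝ, (∫ s in (0:ℝ)..1, ‖iteratedDeriv 2 (fun u => X u t') s‖ ^ 2) = FF t' := by
    intro t'
    rw [hFFnorm t']
    apply intervalIntegral.integral_congr
    intro s _
    dsimp only
    rw [itd2 t' s]
  rw [hIF t, hIF 0]
  linarith [hFFle]
end
end

section
/- Let X ∈ C⁴([0,1];ℝ³) be inextensible (|X'(s)| = 1 for all s) and let λ ∈ C¹([0,1];ℝ). Suppose that d/ds (X'''(s) − λ(s)X'(s)) = 0 for all s ∈ [0,1], that X''(0) = X''(1) = 0, and that X'''(0) − λ(0)X'(0) = 0. Then X''(s) = 0 for all s ∈ [0,1]; equivalently, X(s) = X(0) + sX'(0) is a straight line segment. -/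
open MeasureTheory Set
open scoped RealInnerProductSpace

noncomputable section

/-- the only free-end Euler elasticae are straight lines. -/
theorem free_end_elastica_is_straight (X : ℝ → E3) (lam : ℝ → ℝ)
    (hX : ContDiff ℝ 4 X) (hlam : ContDiff ℝ 1 lam)
    (hinext : ∀ s ∈ Icc (0:ℝ) 1, ‖deriv X s‖ = 1)
    (heq : ∀ s ∈ Icc (0:ℝ) 1,
      deriv (fun u => iteratedDeriv 3 X u - lam u • deriv X u) s = 0)
    (hb0 : iteratedDeriv 2 X 0 = 0) (hb1 : iteratedDeriv 2 X 1 = 0)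
    (hforce : iteratedDeriv 3 X 0 - lam 0 • deriv X 0 = 0) :
    (∀ s ∈ Icc (0:ℝ) 1, iteratedDeriv 2 X s = 0) ∧
    (∀ s ∈ Icc (0:ℝ) 1, X s = X 0 + s • deriv X 0) := by
  -- regularity of iterated derivatives
  have h1 : ContDiff ℝ 3 (deriv X) := by
    have := ContDiff.iterate_deriv' (𝕜 := ℝ) 3 1 (f := X) (by exact_mod_cast hX)
    simpa using this
  have h2 : ContDiff ℝ 2 (iteratedDeriv 2 X) := by
    have := ContDiff.iterate_deriv' (𝕜 := ℝ) 2 2 (f := X) (by exact_mod_cast hX)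
    simpa [iteratedDeriv_eq_iterate] using this
  have h3 : ContDiff ℝ 1 (iteratedDeriv 3 X) := by
    have := ContDiff.iterate_deriv' (𝕜 := ℝ) 1 3 (f := X) (by exact_mod_cast hX)
    simpa [iteratedDeriv_eq_iterate] using this
  have hdX : ∀ s, HasDerivAt X (deriv X s) s :=
    fun s => ((hX.differentiable (by norm_num)) s).hasDerivAt
  have hd2 : ∀ s, HasDerivAt (deriv X) (iteratedDeriv 2 X s) s := by
    intro s
    have := ((h1.differentiable (by norm_num)) s).hasDerivAt
    rwa [show iteratedDeriv 2 X s = deriv (deriv X) s by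
      simp [iteratedDeriv_succ, iteratedDeriv_one]]
  have hd3 : ∀ s, HasDerivAt (iteratedDeriv 2 X) (iteratedDeriv 3 X s) s := by
    intro s
    have := ((h2.differentiable (by norm_num)) s).hasDerivAt
    rwa [show iteratedDeriv 3 X s = deriv (iteratedDeriv 2 X) s by
      rw [iteratedDeriv_succ]]
  -- Step 1: F := X''' - lam • X' is constant, hence ≡ 0 on Icc
  set F : ℝ → E3 := fun u => iteratedDeriv 3 X u - lam u • deriv X u with hF
  have hFdiff : Differentiable ℝ F :=
    (h3.differentiable (by norm_num)).sub
      ((hlam.differentiable (by norm_num)).smul (h1.differentiable (by norm_num)))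
  have hFconst : ∀ s ∈ Icc (0:ℝ) 1, F s = 0 := by
    have key := constant_of_has_deriv_right_zero (f := F) (a := (0:ℝ)) (b := 1)
      hFdiff.continuous.continuousOn
      (fun x hx => by
        have := (hFdiff x).hasDerivAt
        rw [show deriv F x = 0 from heq x (Ico_subset_Icc_self hx)] at this
        exact this.hasDerivWithinAt)
    intro s hs
    rw [key s hs]
    simpa [hF] using hforce
  have hthird : ∀ s ∈ Icc (0:ℝ) 1, iteratedDeriv 3 X s = lam s • deriv X s := by
    intro s hs
    have := hFconst s hs
    simpa [hF, sub_eq_zero] using this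
  -- Step 2: tangent and curvature vector are orthogonal on Icc
  have horth : ∀ s ∈ Icc (0:ℝ) 1, ⟪deriv X s, iteratedDeriv 2 X s⟫ = 0 := by
    intro s hs
    have hD : HasDerivWithinAt (fun t => ⟪deriv X t, deriv X t⟫)
        (⟪deriv X s, iteratedDeriv 2 X s⟫ + ⟪iteratedDeriv 2 X s, deriv X s⟫)
        (Icc (0:ℝ) 1) s :=
      ((hd2 s).inner ℝ (hd2 s)).hasDerivWithinAt
    have hconst : HasDerivWithinAt (fun t => ⟪deriv X t, deriv X t⟫) 0 (Icc (0:ℝ) 1) s := by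
      refine (hasDerivWithinAt_const s (Icc (0:ℝ) 1) (1:ℝ)).congr (fun x hx => ?_) ?_
      · rw [real_inner_self_eq_norm_sq, hinext x hx]; norm_num
      · rw [real_inner_self_eq_norm_sq, hinext s hs]; norm_num
    have hu := uniqueDiffOn_Icc_zero_one s hs
    have := (hD.derivWithin hu).symm.trans (hconst.derivWithin hu)
    have hsymm : ⟪iteratedDeriv 2 X s, deriv X s⟫ = ⟪deriv X s, iteratedDeriv 2 X s⟫ :=
      real_inner_comm _ _
    linarith [this, hsymm.symm]
  -- Step 3: ‖X''‖² is constant, hence X'' ≡ 0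
  have hcurv : ∀ s ∈ Icc (0:ℝ) 1, iteratedDeriv 2 X s = 0 := by
    have key := constant_of_has_deriv_right_zero
      (f := fun t => ⟪iteratedDeriv 2 X t, iteratedDeriv 2 X t⟫) (a := (0:ℝ)) (b := 1)
      (Continuous.continuousOn (by
        exact ((h2.differentiable (by norm_num)).continuous.inner
          (h2.differentiable (by norm_num)).continuous)))
      (fun x hx => by
        have hx' : x ∈ Icc (0:ℝ) 1 := Ico_subset_Icc_self hx
        have hD : HasDerivAt (fun t => ⟪iteratedDeriv 2 X t, iteratedDeriv 2 X t⟫)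
            (⟪iteratedDeriv 2 X x, iteratedDeriv 3 X x⟫ +
              ⟪iteratedDeriv 3 X x, iteratedDeriv 2 X x⟫) x :=
          (hd3 x).inner ℝ (hd3 x)
        have hz : ⟪iteratedDeriv 2 X x, iteratedDeriv 3 X x⟫ = 0 := by
          rw [hthird x hx', real_inner_smul_right, real_inner_comm, horth x hx', mul_zero]
        have hz2 : ⟪iteratedDeriv 3 X x, iteratedDeriv 2 X x⟫ = 0 := by
          rw [real_inner_comm]; exact hz
        rw [show (⟪iteratedDeriv 2 X x, iteratedDeriv 3 X x⟫ +
              ⟪iteratedDeriv 3 X x, iteratedDeriv 2 X x⟫) = 0 by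
            rw [hz, hz2, add_zero]] at hD
        exact hD.hasDerivWithinAt)
    intro s hs
    have := key s hs
    simp only [hb0, inner_zero_left] at this
    exact inner_self_eq_zero.mp this
  refine ⟨hcurv, ?_⟩
  -- Step 4: the tangent is constant and X is a straight line
  have htan : ∀ s ∈ Icc (0:ℝ) 1, deriv X s = deriv X 0 :=
    constant_of_has_deriv_right_zero (h1.continuous.continuousOn)
      (fun x hx => by
        have := hd2 x
        rw [hcurv x (Ico_subset_Icc_self hx)] at this
        exact this.hasDerivWithinAt)
  have key := constant_of_has_deriv_right_zero
    (f := fun s => X s - s • deriv X 0) (a := (0:ℝ)) (b := 1)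
    (Continuous.continuousOn (hX.continuous.sub (continuous_id.smul continuous_const)))
    (fun x hx => by
      have hD : HasDerivAt (fun s => X s - s • deriv X 0) (deriv X x - deriv X 0) x := by
        have h' : HasDerivAt (fun s : ℝ => s • deriv X 0) ((1:ℝ) • deriv X 0) x :=
          (hasDerivAt_id x).smul_const (deriv X 0)
        have h'' := (hdX x).sub h'
        rw [one_smul] at h''
        exact h''
      rw [htan x (Ico_subset_Icc_self hx), sub_self] at hD
      exact hD.hasDerivWithinAt)
  intro s hs
  have := key s hs
  simp only [zero_smul, sub_zero] at this
  rw [sub_eq_iff_eq_add] at this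
  rw [this]
end
end

section
/- Let γ ≥ 0 and η ∈ (0,1]. There exists a constant C = C(γ) > 0 such that the following holds. Let X ∈ C⁴([0,1];ℝ³) be inextensible (|X'(s)| = 1 for all s) with X''(0) = X''(1) = 0, let κ₃ ∈ C⁰([0,1];ℝ), and let λ ∈ C²([0,1];ℝ) satisfy λ(0) = λ(1) = 0 and (1+γ)λ'' − |X''|²λ = −(4+3γ)·d/ds(X'''·X'') + |X'''|² − ηκ₃ X'·(X'' × X''') on [0,1]. Then ‖λ‖_{H¹} ≤ C(‖X''‖_{L²}‖X''''‖_{L²} + ‖κ₃‖_{L²}‖X''‖_{L²}^{5/4}‖X''''‖_{L²}^{3/4}). -/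
open MeasureTheory Set
open scoped RealInnerProductSpace

noncomputable section

/-- Cross product on `ℝ³`. -/
def cross3 (a b : E3) : E3 :=
  (EuclideanSpace.equiv (Fin 3) ℝ).symm
    ![a 1 * b 2 - a 2 * b 1, a 2 * b 0 - a 0 * b 2, a 0 * b 1 - a 1 * b 0]

def L2norm {F : Type*} [NormedAddCommGroup F] (f : ℝ → F) : ℝ :=
  Real.sqrt (∫ s in (0:ℝ)..1, ‖f s‖ ^ 2)

def H1norm {F : Type*} [NormedAddCommGroup F] [NormedSpace ℝ F] (f : ℝ → F) : ℝ :=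
  Real.sqrt (∫ s in (0:ℝ)..1, (‖f s‖ ^ 2 + ‖deriv f s‖ ^ 2))

/-! ### Auxiliary lemmas -/

lemma contDiff_peel {E : Type*} [NormedAddCommGroup E] [NormedSpace ℝ E] {n : ℕ} {f : ℝ → E}
    (h : ContDiff ℝ (n+1 : ℕ) f) : Differentiable ℝ f ∧ ContDiff ℝ (n : ℕ) (deriv f) := by
  rw [show ((n+1 : ℕ) : WithTop ℕ∞) = (n : WithTop ℕ∞) + 1 by push_cast; ring] at h
  rw [contDiff_succ_iff_deriv] at h
  exact ⟨h.1, h.2.2⟩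

lemma cs_integral (f g : ℝ → ℝ) (hf : Continuous f) (hg : Continuous g) :
    (∫ s in (0:ℝ)..1, f s * g s) ≤
      Real.sqrt (∫ s in (0:ℝ)..1, (f s)^2) * Real.sqrt (∫ s in (0:ℝ)..1, (g s)^2) := by
  set F := ∫ s in (0:ℝ)..1, (f s)^2 with hF
  set G := ∫ s in (0:ℝ)..1, (g s)^2 with hG
  set P := ∫ s in (0:ℝ)..1, f s * g s with hP
  have hF0 : 0 ≤ F := intervalIntegral.integral_nonneg (by norm_num) (fun s _ => sq_nonneg _)
  have hG0 : 0 ≤ G := intervalIntegral.integral_nonneg (by norm_num) (fun s _ => sq_nonneg _)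
  have key : P^2 ≤ F * G := by
    have hq : ∀ t : ℝ, 0 ≤ G * (t * t) + (2*P) * t + F := by
      intro t
      have h0 : 0 ≤ ∫ s in (0:ℝ)..1, (t * g s + f s)^2 :=
        intervalIntegral.integral_nonneg (by norm_num) (fun s _ => sq_nonneg _)
      have expand : (∫ s in (0:ℝ)..1, (t * g s + f s)^2) = G * (t*t) + (2*P)*t + F := by
        have h1 : ∀ s, (t * g s + f s)^2 = t*t*(g s)^2 + (2*t)*(f s * g s) + (f s)^2 := by
          intro s; ring
        rw [intervalIntegral.integral_congr (fun s _ => h1 s)]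
        have i1 : IntervalIntegrable (fun s => t*t*(g s)^2) volume 0 1 :=
          ((continuous_const.mul (hg.pow 2)) : Continuous _).intervalIntegrable _ _
        have i2 : IntervalIntegrable (fun s => (2*t)*(f s * g s)) volume 0 1 :=
          ((continuous_const.mul (hf.mul hg)) : Continuous _).intervalIntegrable _ _
        have i3 : IntervalIntegrable (fun s => (f s)^2) volume 0 1 :=
          (hf.pow 2).intervalIntegrable _ _
        rw [intervalIntegral.integral_add (i1.add i2) i3, intervalIntegral.integral_add i1 i2,
          intervalIntegral.integral_const_mul, intervalIntegral.integral_const_mul]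
        ring
      rw [expand] at h0; linarith
    have := discrim_le_zero hq
    rw [discrim] at this
    nlinarith [this]
  calc P ≤ |P| := le_abs_self _
    _ = Real.sqrt (P^2) := (Real.sqrt_sq_eq_abs P).symm
    _ ≤ Real.sqrt (F*G) := Real.sqrt_le_sqrt key
    _ = Real.sqrt F * Real.sqrt G := Real.sqrt_mul hF0 _

lemma norm_cross3_le (a b : E3) : ‖cross3 a b‖ ≤ ‖a‖ * ‖b‖ := by
  have hsq : ‖cross3 a b‖^2 ≤ (‖a‖ * ‖b‖)^2 := by
    have h1 : ∀ v : E3, ‖v‖^2 = v 0^2 + v 1^2 + v 2^2 := by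
      intro v
      rw [EuclideanSpace.norm_eq, Real.sq_sqrt (by positivity)]
      simp [Fin.sum_univ_three, Real.norm_eq_abs, sq_abs]
    rw [h1, mul_pow, h1, h1]
    have hc : ∀ i, cross3 a b i =
        ![a 1 * b 2 - a 2 * b 1, a 2 * b 0 - a 0 * b 2, a 0 * b 1 - a 1 * b 0] i := fun i => rfl
    rw [hc 0, hc 1, hc 2]
    simp only [Matrix.cons_val_zero, Matrix.cons_val_one, Matrix.head_cons, Matrix.cons_val_two, Matrix.tail_cons]
    nlinarith [sq_nonneg (a 0 * b 0 + a 1 * b 1 + a 2 * b 2), sq_nonneg (a 0*b 1 - a 1*b 0)]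
  nlinarith [norm_nonneg (cross3 a b), mul_nonneg (norm_nonneg a) (norm_nonneg b)]

lemma continuous_cross3 {f g : ℝ → E3} (hf : Continuous f) (hg : Continuous g) :
    Continuous (fun s => cross3 (f s) (g s)) := by
  unfold cross3
  apply ((EuclideanSpace.equiv (Fin 3) ℝ).symm : (Fin 3 → ℝ) →L[ℝ] E3).continuous.comp
  have hfi : ∀ i, Continuous fun s => f s i := fun i => (EuclideanSpace.proj i : E3 →L[ℝ] ℝ).continuous.comp hf
  have hgi : ∀ i, Continuous fun s => g s i := fun i => (EuclideanSpace.proj i : E3 →L[ℝ] ℝ).continuous.comp hg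
  apply continuous_pi
  intro i
  fin_cases i <;> simp <;> fun_prop

lemma ftc_int {F : Type*} [NormedAddCommGroup F] [NormedSpace ℝ F] [CompleteSpace F]
    {f f' : ℝ → F} (hd : ∀ s, HasDerivAt f (f' s) s) (hc : Continuous f') (s t : ℝ) :
    ∫ u in s..t, f' u = f t - f s :=
  intervalIntegral.integral_eq_sub_of_hasDerivAt (fun u _ => hd u) (hc.intervalIntegrable s t)

/-- `∫₀¹ |g| ≤ √(∫₀¹ g²)`. -/
lemma l1_le_l2 (g : ℝ → ℝ) (hg : Continuous g) :
    (∫ s in (0:ℝ)..1, |g s|) ≤ Real.sqrt (∫ s in (0:ℝ)..1, (g s)^2) := by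
  have h := cs_integral (fun s => |g s|) (fun _ => (1:ℝ)) hg.abs continuous_const
  simpa [sq_abs] using h

lemma rpow_bound {a b c : ℝ} (ha : 0 ≤ a) (hb : 0 ≤ b) (hc : 0 ≤ c) (hac : a ≤ c)
    (hcab : c ≤ Real.sqrt a * Real.sqrt b) :
    Real.sqrt (2*(Real.sqrt c * Real.sqrt a)) * Real.sqrt c ≤
        Real.sqrt 2 * ((Real.sqrt a)^((5:ℝ)/4) * (Real.sqrt b)^((3:ℝ)/4)) ∧
      (Real.sqrt a)^((5:ℝ)/4) * (Real.sqrt b)^((3:ℝ)/4) ≤ Real.sqrt a * Real.sqrt b := by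
  set u := Real.sqrt a with hu
  set v := Real.sqrt b with hv
  set w := Real.sqrt c with hw
  have hu0 : 0 ≤ u := Real.sqrt_nonneg _
  have hv0 : 0 ≤ v := Real.sqrt_nonneg _
  have hw0 : 0 ≤ w := Real.sqrt_nonneg _
  have hu2 : u^2 = a := Real.sq_sqrt ha
  have hv2 : v^2 = b := Real.sq_sqrt hb
  have hw2 : w^2 = c := Real.sq_sqrt hc
  have huv : u ≤ v := by nlinarith
  have hw2uv : w^2 ≤ u*v := by nlinarith
  constructor
  · -- √(2wu)·w ≤ √2 · u^{5/4} v^{3/4}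
    have e1 : Real.sqrt (2*(w*u)) = Real.sqrt 2 * (Real.sqrt w * Real.sqrt u) := by
      rw [Real.sqrt_mul (by norm_num), Real.sqrt_mul hw0]
    rw [e1]
    have key : Real.sqrt w * Real.sqrt u * w ≤ u^((5:ℝ)/4) * v^((3:ℝ)/4) := by
      have hwr : Real.sqrt w * w = w^((3:ℝ)/2) := by
        rw [Real.sqrt_eq_rpow, show ((3:ℝ)/2) = 1/2 + 1 by norm_num,
          Real.rpow_add' hw0 (by norm_num), Real.rpow_one]
      have hw32 : w^((3:ℝ)/2) ≤ u^((3:ℝ)/4) * v^((3:ℝ)/4) := by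
        have h1 : w^((3:ℝ)/2) = (w^2)^((3:ℝ)/4) := by
          rw [← Real.rpow_natCast w 2, ← Real.rpow_mul hw0]
          norm_num
        rw [h1, ← Real.mul_rpow hu0 hv0]
        exact Real.rpow_le_rpow (by positivity) hw2uv (by norm_num)
      have hur : Real.sqrt u = u^((1:ℝ)/2) := Real.sqrt_eq_rpow u
      calc Real.sqrt w * Real.sqrt u * w = u^((1:ℝ)/2) * (Real.sqrt w * w) := by
            rw [hur]; ring
        _ = u^((1:ℝ)/2) * w^((3:ℝ)/2) := by rw [hwr]
        _ ≤ u^((1:ℝ)/2) * (u^((3:ℝ)/4) * v^((3:ℝ)/4)) := by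
            apply mul_le_mul_of_nonneg_left hw32 (by positivity)
        _ = (u^((1:ℝ)/2) * u^((3:ℝ)/4)) * v^((3:ℝ)/4) := by ring
        _ = u^((5:ℝ)/4) * v^((3:ℝ)/4) := by
            rw [← Real.rpow_add' hu0 (by norm_num)]; norm_num
    calc Real.sqrt 2 * (Real.sqrt w * Real.sqrt u) * w
        = Real.sqrt 2 * (Real.sqrt w * Real.sqrt u * w) := by ring
      _ ≤ Real.sqrt 2 * (u^((5:ℝ)/4) * v^((3:ℝ)/4)) :=
          mul_le_mul_of_nonneg_left key (Real.sqrt_nonneg 2)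
  · -- u^{5/4} v^{3/4} ≤ u v
    have e2 : u^((5:ℝ)/4) = u * u^((1:ℝ)/4) := by
      rw [show ((5:ℝ)/4) = 1 + 1/4 by norm_num, Real.rpow_add' hu0 (by norm_num), Real.rpow_one]
    have e3 : v^((1:ℝ)/4) * v^((3:ℝ)/4) = v := by
      rw [← Real.rpow_add' hv0 (by norm_num)]; norm_num
    calc u^((5:ℝ)/4) * v^((3:ℝ)/4) = u * (u^((1:ℝ)/4) * v^((3:ℝ)/4)) := by rw [e2]; ring
      _ ≤ u * (v^((1:ℝ)/4) * v^((3:ℝ)/4)) := by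
          apply mul_le_mul_of_nonneg_left _ hu0
          apply mul_le_mul_of_nonneg_right (Real.rpow_le_rpow hu0 huv (by norm_num)) (by positivity)
      _ = u * v := by rw [e3]

set_option maxHeartbeats 2000000 in
/-- tension estimate for the free-end Kirchhoff rod. -/
theorem rod_tension_estimate (γ η : ℝ) (hγ : 0 ≤ γ) (hη0 : 0 < η) (hη1 : η ≤ 1) :
    ∃ C : ℝ, 0 < C ∧
      ∀ (X : ℝ → E3) (κ₃ lam : ℝ → ℝ),
        ContDiff ℝ 4 X → Continuous κ₃ → ContDiff ℝ 2 lam →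
        (∀ s ∈ Icc (0:ℝ) 1, ‖deriv X s‖ = 1) →
        iteratedDeriv 2 X 0 = 0 → iteratedDeriv 2 X 1 = 0 →
        lam 0 = 0 → lam 1 = 0 →
        (∀ s ∈ Icc (0:ℝ) 1,
          (1 + γ) * iteratedDeriv 2 lam s - ‖iteratedDeriv 2 X s‖ ^ 2 * lam s =
            -(4 + 3 * γ) * deriv (fun u => ⟪iteratedDeriv 3 X u, iteratedDeriv 2 X u⟫) s
            + ‖iteratedDeriv 3 X s‖ ^ 2
            - η * κ₃ s * ⟪deriv X s, cross3 (iteratedDeriv 2 X s) (iteratedDeriv 3 X s)⟫) →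
        H1norm lam ≤
          C * (L2norm (iteratedDeriv 2 X) * L2norm (iteratedDeriv 4 X)
            + L2norm κ₃ * (L2norm (iteratedDeriv 2 X)) ^ ((5:ℝ)/4)
              * (L2norm (iteratedDeriv 4 X)) ^ ((3:ℝ)/4)) := by
  have h2pos : (0:ℝ) < Real.sqrt 2 := Real.sqrt_pos.mpr (by norm_num)
  have h2le : Real.sqrt 2 ≤ 2 := by
    nlinarith [Real.sq_sqrt (by norm_num : (0:ℝ) ≤ 2), Real.sqrt_nonneg 2]
  set c₀ : ℝ := (4+3*γ)*Real.sqrt 2 + 2 with hc₀def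
  have hc₀pos : 0 < c₀ := by nlinarith
  refine ⟨Real.sqrt 2 * c₀, by positivity, ?_⟩
  intro X κ₃ lam hX hκ hlam hunit hX20 hX21 hl0 hl1 hode
  -- derivative tower for X
  have hX' : ContDiff ℝ ((3+1 : ℕ) : WithTop ℕ∞) X := by exact_mod_cast hX
  obtain ⟨hXd, hX1cd⟩ := contDiff_peel hX'
  set X1 := deriv X with hX1def
  obtain ⟨hX1d, hX2cd⟩ := contDiff_peel (n := 2) (by exact_mod_cast hX1cd)
  set X2 := deriv X1 with hX2def
  obtain ⟨hX2d, hX3cd⟩ := contDiff_peel (n := 1) (by exact_mod_cast hX2cd)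
  set X3 := deriv X2 with hX3def
  obtain ⟨hX3d, hX4cd⟩ := contDiff_peel (n := 0) (by exact_mod_cast hX3cd)
  set X4 := deriv X3 with hX4def
  have cX1 : Continuous X1 := hX1cd.continuous
  have cX2 : Continuous X2 := hX2cd.continuous
  have cX3 : Continuous X3 := hX3cd.continuous
  have cX4 : Continuous X4 := hX4cd.continuous
  have dX2 : ∀ s, HasDerivAt X2 (X3 s) s := fun s => (hX2d s).hasDerivAt
  have dX3 : ∀ s, HasDerivAt X3 (X4 s) s := fun s => (hX3d s).hasDerivAt
  -- derivative tower for lam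
  have hlam' : ContDiff ℝ ((1+1 : ℕ) : WithTop ℕ∞) lam := by exact_mod_cast hlam
  obtain ⟨hlamd, hL1cd⟩ := contDiff_peel hlam'
  set L1 := deriv lam with hL1def
  obtain ⟨hL1d, hL2cd⟩ := contDiff_peel (n := 0) (by exact_mod_cast hL1cd)
  set L2 := deriv L1 with hL2def
  have cL1 : Continuous L1 := hL1cd.continuous
  have cL2 : Continuous L2 := hL2cd.continuous
  have dlam : ∀ s, HasDerivAt lam (L1 s) s := fun s => (hlamd s).hasDerivAt
  have dL1 : ∀ s, HasDerivAt L1 (L2 s) s := fun s => (hL1d s).hasDerivAt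
  -- identify iterated derivatives
  have e2 : iteratedDeriv 2 X = X2 := by
    show iteratedDeriv (1+1) X = X2
    rw [iteratedDeriv_succ, iteratedDeriv_one]
  have e3 : iteratedDeriv 3 X = X3 := by
    show iteratedDeriv (2+1) X = X3
    rw [iteratedDeriv_succ, e2]
  have e4 : iteratedDeriv 4 X = X4 := by
    show iteratedDeriv (3+1) X = X4
    rw [iteratedDeriv_succ, e3]
  have elam2 : iteratedDeriv 2 lam = L2 := by
    show iteratedDeriv (1+1) lam = L2
    rw [iteratedDeriv_succ, iteratedDeriv_one]
  rw [e2] at hX20 hX21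
  rw [e2, e4]
  simp only [e2, e3, elam2] at hode
  -- the basic integral quantities
  set a := ∫ s in (0:ℝ)..1, ‖X2 s‖^2 with hadef
  set b := ∫ s in (0:ℝ)..1, ‖X4 s‖^2 with hbdef
  set c := ∫ s in (0:ℝ)..1, ‖X3 s‖^2 with hcdef
  set l := ∫ s in (0:ℝ)..1, (L1 s)^2 with hldef
  set k := ∫ s in (0:ℝ)..1, (κ₃ s)^2 with hkdef
  have ha0 : 0 ≤ a := intervalIntegral.integral_nonneg (by norm_num) (fun s _ => by positivity)
  have hb0 : 0 ≤ b := intervalIntegral.integral_nonneg (by norm_num) (fun s _ => by positivity)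
  have hc0 : 0 ≤ c := intervalIntegral.integral_nonneg (by norm_num) (fun s _ => by positivity)
  have hl0' : 0 ≤ l := intervalIntegral.integral_nonneg (by norm_num) (fun s _ => by positivity)
  have hk0 : 0 ≤ k := intervalIntegral.integral_nonneg (by norm_num) (fun s _ => by positivity)
  -- L2 norms
  have hA : L2norm X2 = Real.sqrt a := rfl
  have hB : L2norm X4 = Real.sqrt b := rfl
  have hK : L2norm κ₃ = Real.sqrt k := by
    rw [L2norm]
    congr 1
    exact intervalIntegral.integral_congr (fun s _ => by
      simp [Real.norm_eq_abs, sq_abs])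
  -- ∫₀¹ ‖X3‖ ≤ √c
  have l2X3 : (∫ s in (0:ℝ)..1, ‖X3 s‖) ≤ Real.sqrt c := by
    have h := cs_integral (fun s => ‖X3 s‖) (fun _ => (1:ℝ)) cX3.norm continuous_const
    simpa [sq_abs] using h
  -- pointwise bound for X2 : ‖X2 s‖ ≤ √c on [0,1]
  have hX2ptw : ∀ s ∈ Icc (0:ℝ) 1, ‖X2 s‖ ≤ Real.sqrt c := by
    intro s hs
    have hfs : X2 s = ∫ u in (0:ℝ)..s, X3 u := by
      rw [ftc_int dX2 cX3 0 s, hX20, sub_zero]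
    calc ‖X2 s‖ = ‖∫ u in (0:ℝ)..s, X3 u‖ := by rw [hfs]
      _ ≤ ∫ u in (0:ℝ)..s, ‖X3 u‖ := intervalIntegral.norm_integral_le_integral_norm hs.1
      _ ≤ ∫ u in (0:ℝ)..1, ‖X3 u‖ :=
          intervalIntegral.integral_mono_interval le_rfl hs.1 hs.2
            (ae_of_all _ fun u => norm_nonneg _) (cX3.norm.intervalIntegrable _ _)
      _ ≤ Real.sqrt c := l2X3
  -- a ≤ c
  have hac : a ≤ c := by
    have h := intervalIntegral.integral_mono_on (μ := volume) (by norm_num : (0:ℝ) ≤ 1)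
      ((cX2.norm.pow 2).intervalIntegrable _ _)
      (intervalIntegrable_const)
      (fun s hs => by
        have h1 := hX2ptw s hs
        have h2 : ‖X2 s‖^2 ≤ (Real.sqrt c)^2 := pow_le_pow_left₀ (norm_nonneg _) h1 2
        rwa [Real.sq_sqrt hc0] at h2)
    simpa using h
  -- c ≤ √a √b
  have dP : ∀ s, HasDerivAt (fun u => ⟪X3 u, X2 u⟫)
      (⟪X3 s, X3 s⟫ + ⟪X4 s, X2 s⟫) s := fun s => HasDerivAt.inner ℝ (dX3 s) (dX2 s)
  have cP : Continuous (fun u => ⟪X3 u, X2 u⟫) := cX3.inner cX2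
  have cP' : Continuous (fun s => ⟪X3 s, X3 s⟫ + ⟪X4 s, X2 s⟫) :=
    (cX3.inner cX3).add (cX4.inner cX2)
  have hPint : (∫ s in (0:ℝ)..1, (⟪X3 s, X3 s⟫ + ⟪X4 s, X2 s⟫)) = 0 := by
    rw [ftc_int dP cP' 0 1]
    simp [hX20, hX21]
  have hcc : c = - ∫ s in (0:ℝ)..1, ⟪X4 s, X2 s⟫ := by
    have hsplit : (∫ s in (0:ℝ)..1, ⟪X3 s, X3 s⟫) + (∫ s in (0:ℝ)..1, ⟪X4 s, X2 s⟫) = 0 := by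
      rw [← intervalIntegral.integral_add ((cX3.inner cX3).intervalIntegrable _ _)
        ((cX4.inner cX2).intervalIntegrable _ _)]
      exact hPint
    have hcc' : (∫ s in (0:ℝ)..1, ⟪X3 s, X3 s⟫) = c :=
      intervalIntegral.integral_congr (fun s _ => real_inner_self_eq_norm_sq _)
    linarith
  have hcab : c ≤ Real.sqrt a * Real.sqrt b := by
    rw [hcc, ← intervalIntegral.integral_neg]
    calc (∫ s in (0:ℝ)..1, -⟪X4 s, X2 s⟫)
        ≤ ∫ s in (0:ℝ)..1, ‖X4 s‖ * ‖X2 s‖ := by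
          apply intervalIntegral.integral_mono_on (by norm_num)
            (((cX4.inner cX2).neg).intervalIntegrable _ _)
            ((cX4.norm.mul cX2.norm).intervalIntegrable _ _)
          intro s _
          exact (neg_le_abs _).trans (abs_real_inner_le_norm _ _)
      _ ≤ Real.sqrt b * Real.sqrt a := cs_integral _ _ cX4.norm cX2.norm
      _ = Real.sqrt a * Real.sqrt b := mul_comm _ _
  -- pointwise square bound for X2
  set M := Real.sqrt (2*(Real.sqrt c * Real.sqrt a)) with hMdef
  have hM0 : 0 ≤ M := Real.sqrt_nonneg _
  have hX2M : ∀ s ∈ Icc (0:ℝ) 1, ‖X2 s‖ ≤ M := by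
    intro s hs
    have dQ : ∀ t, HasDerivAt (fun u => ⟪X2 u, X2 u⟫)
        (⟪X2 t, X3 t⟫ + ⟪X3 t, X2 t⟫) t := fun t => HasDerivAt.inner ℝ (dX2 t) (dX2 t)
    have cQ' : Continuous (fun t => ⟪X2 t, X3 t⟫ + ⟪X3 t, X2 t⟫) :=
      (cX2.inner cX3).add (cX3.inner cX2)
    have hQs : ⟪X2 s, X2 s⟫ = ∫ t in (0:ℝ)..s, (⟪X2 t, X3 t⟫ + ⟪X3 t, X2 t⟫) := by
      rw [ftc_int dQ cQ' 0 s, hX20]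
      simp
    have h1 : ⟪X2 s, X2 s⟫ ≤ ∫ t in (0:ℝ)..1, 2*(‖X3 t‖*‖X2 t‖) := by
      rw [hQs]
      calc (∫ t in (0:ℝ)..s, (⟪X2 t, X3 t⟫ + ⟪X3 t, X2 t⟫))
          ≤ ∫ t in (0:ℝ)..s, 2*(‖X3 t‖*‖X2 t‖) := by
            apply intervalIntegral.integral_mono_on hs.1
              (cQ'.intervalIntegrable _ _)
              ((continuous_const.mul (cX3.norm.mul cX2.norm)).intervalIntegrable _ _)
            intro t _
            have i1 := abs_real_inner_le_norm (X2 t) (X3 t)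
            have i2 := abs_real_inner_le_norm (X3 t) (X2 t)
            have := le_abs_self ⟪X2 t, X3 t⟫
            have := le_abs_self ⟪X3 t, X2 t⟫
            show ⟪X2 t, X3 t⟫ + ⟪X3 t, X2 t⟫ ≤ 2*(‖X3 t‖*‖X2 t‖)
            nlinarith [norm_nonneg (X2 t), norm_nonneg (X3 t)]
        _ ≤ ∫ t in (0:ℝ)..1, 2*(‖X3 t‖*‖X2 t‖) :=
            intervalIntegral.integral_mono_interval le_rfl hs.1 hs.2
              (ae_of_all _ fun t => by positivity)
              ((continuous_const.mul (cX3.norm.mul cX2.norm)).intervalIntegrable _ _)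
    have h2 : (∫ t in (0:ℝ)..1, 2*(‖X3 t‖*‖X2 t‖)) = 2 * ∫ t in (0:ℝ)..1, ‖X3 t‖*‖X2 t‖ :=
      intervalIntegral.integral_const_mul _ _
    have h3 : (∫ t in (0:ℝ)..1, ‖X3 t‖*‖X2 t‖) ≤ Real.sqrt c * Real.sqrt a :=
      cs_integral _ _ cX3.norm cX2.norm
    have h4 : ‖X2 s‖^2 = ⟪X2 s, X2 s⟫ := (real_inner_self_eq_norm_sq _).symm
    have h5 : ‖X2 s‖^2 ≤ 2*(Real.sqrt c * Real.sqrt a) := by linarith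
    have h6 : M^2 = 2*(Real.sqrt c * Real.sqrt a) := Real.sq_sqrt (by positivity)
    nlinarith [norm_nonneg (X2 s)]
  -- pointwise bound for lam
  set Λ := Real.sqrt l with hΛdef
  have hΛ0 : 0 ≤ Λ := Real.sqrt_nonneg _
  have hlamptw : ∀ s ∈ Icc (0:ℝ) 1, |lam s| ≤ Λ := by
    intro s hs
    have hfs : lam s = ∫ u in (0:ℝ)..s, L1 u := by
      rw [ftc_int dlam cL1 0 s, hl0, sub_zero]
    have habs : |lam s| = ‖∫ u in (0:ℝ)..s, L1 u‖ := by rw [hfs, Real.norm_eq_abs]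
    calc |lam s| = ‖∫ u in (0:ℝ)..s, L1 u‖ := habs
      _ ≤ ∫ u in (0:ℝ)..s, ‖L1 u‖ := intervalIntegral.norm_integral_le_integral_norm hs.1
      _ ≤ ∫ u in (0:ℝ)..1, ‖L1 u‖ :=
          intervalIntegral.integral_mono_interval le_rfl hs.1 hs.2
            (ae_of_all _ fun u => norm_nonneg _) (cL1.norm.intervalIntegrable _ _)
      _ = ∫ u in (0:ℝ)..1, |L1 u| := by
          exact intervalIntegral.integral_congr (fun u _ => Real.norm_eq_abs _)
      _ ≤ Λ := l1_le_l2 _ cL1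
  -- energy identity
  set h1f : ℝ → ℝ := fun s => (1+γ)*(L1 s)^2 + ‖X2 s‖^2*(lam s)^2 with h1fdef
  set h2f : ℝ → ℝ := fun s => ‖X3 s‖^2 * lam s
    - η*(κ₃ s)*⟪X1 s, cross3 (X2 s) (X3 s)⟫*(lam s)
    + (4+3*γ)*((⟪X3 s, X2 s⟫) * L1 s) with h2fdef
  have cρ : Continuous (fun s => ⟪X1 s, cross3 (X2 s) (X3 s)⟫) :=
    cX1.inner (continuous_cross3 cX2 cX3)
  have ch1f : Continuous h1f := by
    apply Continuous.add
    · exact continuous_const.mul (cL1.pow 2)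
    · exact (cX2.norm.pow 2).mul ((hlam.continuous).pow 2)
  have ch2f : Continuous h2f := by
    apply Continuous.add
    · apply Continuous.sub
      · exact (cX3.norm.pow 2).mul hlam.continuous
      · exact (((continuous_const.mul hκ).mul cρ).mul hlam.continuous)
    · exact continuous_const.mul (cP.mul cL1)
  have energy : (∫ s in (0:ℝ)..1, h1f s) + (∫ s in (0:ℝ)..1, h2f s) = 0 := by
    set G : ℝ → ℝ := fun s => (1+γ)*(lam s * L1 s) + (4+3*γ)*((⟪X3 s, X2 s⟫) * lam s)
      with hGdef
    set G' : ℝ → ℝ := fun s => (1+γ)*(L1 s * L1 s + lam s * L2 s)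
      + (4+3*γ)*((⟪X3 s, X3 s⟫ + ⟪X4 s, X2 s⟫) * lam s + (⟪X3 s, X2 s⟫) * L1 s) with hG'def
    have dG : ∀ s, HasDerivAt G (G' s) s := by
      intro s
      exact (((dlam s).mul (dL1 s)).const_mul (1+γ)).add
        (((dP s).mul (dlam s)).const_mul (4+3*γ))
    have cG' : Continuous G' := by
      apply Continuous.add
      · exact continuous_const.mul ((cL1.mul cL1).add (hlam.continuous.mul cL2))
      · exact continuous_const.mul ((cP'.mul hlam.continuous).add (cP.mul cL1))
    have hGint : (∫ s in (0:ℝ)..1, G' s) = 0 := by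
      rw [ftc_int dG cG' 0 1]
      simp [hGdef, hl0, hl1]
    have hEq : EqOn G' (fun s => h1f s + h2f s) (uIcc (0:ℝ) 1) := by
      rw [uIcc_of_le (by norm_num : (0:ℝ) ≤ 1)]
      intro s hs
      have hode' := hode s hs
      have hdd : deriv (fun u => ⟪X3 u, X2 u⟫) s = ⟪X3 s, X3 s⟫ + ⟪X4 s, X2 s⟫ :=
        (dP s).deriv
      rw [hdd] at hode'
      simp only [hG'def, h1fdef, h2fdef]
      linear_combination (lam s) * hode'
    have hcongr := intervalIntegral.integral_congr (μ := volume) hEq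
    rw [hcongr] at hGint
    rw [← intervalIntegral.integral_add (ch1f.intervalIntegrable _ _)
      (ch2f.intervalIntegrable _ _)]
    exact hGint
  -- lower bound for ∫ h1f
  have hh1low : (1+γ)*l ≤ ∫ s in (0:ℝ)..1, h1f s := by
    have hsplit : (∫ s in (0:ℝ)..1, h1f s)
        = (∫ s in (0:ℝ)..1, (1+γ)*(L1 s)^2) + ∫ s in (0:ℝ)..1, ‖X2 s‖^2*(lam s)^2 :=
      intervalIntegral.integral_add
        ((continuous_const.mul (cL1.pow 2)).intervalIntegrable _ _)
        (((cX2.norm.pow 2).mul ((hlam.continuous).pow 2)).intervalIntegrable _ _)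
    have h1 : (∫ s in (0:ℝ)..1, (1+γ)*(L1 s)^2) = (1+γ)*l :=
      intervalIntegral.integral_const_mul _ _
    have h2 : 0 ≤ ∫ s in (0:ℝ)..1, ‖X2 s‖^2*(lam s)^2 :=
      intervalIntegral.integral_nonneg (by norm_num) (fun s _ => by positivity)
    rw [hsplit, h1]; linarith
  -- upper bound for -∫ h2f
  set q : ℝ → ℝ := fun s => Λ*M*(|κ₃ s| *‖X3 s‖) + Λ*‖X3 s‖^2 + ((4+3*γ)*M)*(‖X3 s‖* |L1 s|)
    with hqdef
  have cq : Continuous q := by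
    apply Continuous.add
    · apply Continuous.add
      · exact continuous_const.mul (hκ.abs.mul cX3.norm)
      · exact continuous_const.mul (cX3.norm.pow 2)
    · exact continuous_const.mul (cX3.norm.mul cL1.abs)
  have hptw : ∀ s ∈ Icc (0:ℝ) 1, -h2f s ≤ q s := by
    intro s hs
    have hρb : |⟪X1 s, cross3 (X2 s) (X3 s)⟫| ≤ M*‖X3 s‖ := by
      calc |⟪X1 s, cross3 (X2 s) (X3 s)⟫| ≤ ‖X1 s‖ * ‖cross3 (X2 s) (X3 s)‖ :=
            abs_real_inner_le_norm _ _
        _ = ‖cross3 (X2 s) (X3 s)‖ := by rw [hunit s hs, one_mul]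
        _ ≤ ‖X2 s‖ * ‖X3 s‖ := norm_cross3_le _ _
        _ ≤ M * ‖X3 s‖ := by
            apply mul_le_mul_of_nonneg_right (hX2M s hs) (norm_nonneg _)
    have hPb : |⟪X3 s, X2 s⟫| ≤ M*‖X3 s‖ := by
      calc |⟪X3 s, X2 s⟫| ≤ ‖X3 s‖ * ‖X2 s‖ := abs_real_inner_le_norm _ _
        _ ≤ ‖X3 s‖ * M := mul_le_mul_of_nonneg_left (hX2M s hs) (norm_nonneg _)
        _ = M * ‖X3 s‖ := mul_comm _ _
    have hlb := hlamptw s hs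
    have e1 : η*(κ₃ s)*⟪X1 s, cross3 (X2 s) (X3 s)⟫*(lam s) ≤ Λ*M*(|κ₃ s| *‖X3 s‖) := by
      calc η*(κ₃ s)*⟪X1 s, cross3 (X2 s) (X3 s)⟫*(lam s)
          ≤ |η*(κ₃ s)*⟪X1 s, cross3 (X2 s) (X3 s)⟫*(lam s)| := le_abs_self _
          _ = η*(|κ₃ s| *(|⟪X1 s, cross3 (X2 s) (X3 s)⟫| * |lam s|)) := by
              rw [abs_mul, abs_mul, abs_mul, abs_of_pos hη0]; ring
          _ ≤ 1*(|κ₃ s| *((M*‖X3 s‖)*Λ)) := by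
              gcongr
          _ = Λ*M*(|κ₃ s| *‖X3 s‖) := by ring
    have e2 : -(‖X3 s‖^2 * lam s) ≤ Λ*‖X3 s‖^2 := by
      have h := mul_le_mul_of_nonneg_left ((neg_le_abs (lam s)).trans hlb) (sq_nonneg ‖X3 s‖)
      calc -(‖X3 s‖^2 * lam s) = ‖X3 s‖^2 * (-(lam s)) := by ring
        _ ≤ ‖X3 s‖^2 * Λ := h
        _ = Λ*‖X3 s‖^2 := by ring
    have e3 : -((4+3*γ)*((⟪X3 s, X2 s⟫) * L1 s)) ≤ ((4+3*γ)*M)*(‖X3 s‖* |L1 s|) := by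
      have h1 : -(⟪X3 s, X2 s⟫ * L1 s) ≤ (M*‖X3 s‖)* |L1 s| := by
        calc -(⟪X3 s, X2 s⟫ * L1 s) ≤ |⟪X3 s, X2 s⟫ * L1 s| := neg_le_abs _
          _ = |⟪X3 s, X2 s⟫| * |L1 s| := abs_mul _ _
          _ ≤ (M*‖X3 s‖)* |L1 s| := mul_le_mul_of_nonneg_right hPb (abs_nonneg _)
      have h2 : (0:ℝ) ≤ 4+3*γ := by linarith
      calc -((4+3*γ)*((⟪X3 s, X2 s⟫) * L1 s)) = (4+3*γ)*(-(⟪X3 s, X2 s⟫ * L1 s)) := by ring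
        _ ≤ (4+3*γ)*((M*‖X3 s‖)* |L1 s|) := mul_le_mul_of_nonneg_left h1 h2
        _ = ((4+3*γ)*M)*(‖X3 s‖* |L1 s|) := by ring
    simp only [h2fdef, hqdef]
    linarith
  have hT : (1+γ)*l ≤ ∫ s in (0:ℝ)..1, q s := by
    have h1 : (1+γ)*l ≤ - ∫ s in (0:ℝ)..1, h2f s := by linarith
    have h2 : (- ∫ s in (0:ℝ)..1, h2f s) = ∫ s in (0:ℝ)..1, -h2f s :=
      (intervalIntegral.integral_neg).symm
    have h3 : (∫ s in (0:ℝ)..1, -h2f s) ≤ ∫ s in (0:ℝ)..1, q s :=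
      intervalIntegral.integral_mono_on (by norm_num)
        (ch2f.neg.intervalIntegrable _ _) (cq.intervalIntegrable _ _) hptw
    linarith
  -- evaluate ∫ q
  have hI1 : (∫ s in (0:ℝ)..1, |κ₃ s| *‖X3 s‖) ≤ Real.sqrt k * Real.sqrt c := by
    have h := cs_integral (fun s => |κ₃ s|) (fun s => ‖X3 s‖) hκ.abs cX3.norm
    simpa [sq_abs] using h
  have hI2 : (∫ s in (0:ℝ)..1, ‖X3 s‖* |L1 s|) ≤ Real.sqrt c * Λ := by
    have h := cs_integral (fun s => ‖X3 s‖) (fun s => |L1 s|) cX3.norm cL1.abs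
    simpa [sq_abs] using h
  have hqint : (∫ s in (0:ℝ)..1, q s)
      = Λ*M*(∫ s in (0:ℝ)..1, |κ₃ s| *‖X3 s‖) + Λ*c
        + ((4+3*γ)*M)*(∫ s in (0:ℝ)..1, ‖X3 s‖* |L1 s|) := by
    have i1 : IntervalIntegrable (fun s => Λ*M*(|κ₃ s| *‖X3 s‖)) volume 0 1 :=
      (continuous_const.mul (hκ.abs.mul cX3.norm)).intervalIntegrable _ _
    have i2 : IntervalIntegrable (fun s => Λ*‖X3 s‖^2) volume 0 1 :=
      (continuous_const.mul (cX3.norm.pow 2)).intervalIntegrable _ _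
    have i3 : IntervalIntegrable (fun s => ((4+3*γ)*M)*(‖X3 s‖* |L1 s|)) volume 0 1 :=
      (continuous_const.mul (cX3.norm.mul cL1.abs)).intervalIntegrable _ _
    rw [hqdef]
    rw [intervalIntegral.integral_add (i1.add i2) i3, intervalIntegral.integral_add i1 i2,
      intervalIntegral.integral_const_mul, intervalIntegral.integral_const_mul,
      intervalIntegral.integral_const_mul]
  -- combine
  have hD : (1+γ)*l ≤ Λ * (M*Real.sqrt c*Real.sqrt k + c + (4+3*γ)*(M*Real.sqrt c)) := by
    have t1 : Λ*M*(∫ s in (0:ℝ)..1, |κ₃ s| *‖X3 s‖) ≤ Λ*M*(Real.sqrt k * Real.sqrt c) := by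
      apply mul_le_mul_of_nonneg_left hI1 (by positivity)
    have t3 : ((4+3*γ)*M)*(∫ s in (0:ℝ)..1, ‖X3 s‖* |L1 s|) ≤ ((4+3*γ)*M)*(Real.sqrt c * Λ) := by
      apply mul_le_mul_of_nonneg_left hI2 (by positivity)
    have := hT
    rw [hqint] at this
    linarith [this, t1, t3]
  have hΛD : Λ ≤ M*Real.sqrt c*Real.sqrt k + c + (4+3*γ)*(M*Real.sqrt c) := by
    have hΛ2 : Λ*Λ = l := Real.mul_self_sqrt hl0'
    rcases eq_or_lt_of_le hΛ0 with h0 | h0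
    · rw [← h0]
      positivity
    · have hll : l ≤ Λ * (M*Real.sqrt c*Real.sqrt k + c + (4+3*γ)*(M*Real.sqrt c)) := by
        nlinarith [hD, hl0']
      rw [← hΛ2] at hll
      exact le_of_mul_le_mul_left hll h0
  -- rpow arithmetic
  obtain ⟨hr1, hr2⟩ := rpow_bound ha0 hb0 hc0 hac hcab
  set S := (Real.sqrt a)^((5:ℝ)/4) * (Real.sqrt b)^((3:ℝ)/4) with hSdef
  have hS0 : 0 ≤ S := by positivity
  have hMc : M * Real.sqrt c ≤ Real.sqrt 2 * S := hr1
  have hDbound : M*Real.sqrt c*Real.sqrt k + c + (4+3*γ)*(M*Real.sqrt c)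
      ≤ c₀ * (Real.sqrt a * Real.sqrt b + Real.sqrt k * S) := by
    have huv0 : 0 ≤ Real.sqrt a * Real.sqrt b := by positivity
    have hk0' : 0 ≤ Real.sqrt k := Real.sqrt_nonneg _
    have A1 : M*Real.sqrt c*Real.sqrt k ≤ Real.sqrt 2 * S * Real.sqrt k :=
      mul_le_mul_of_nonneg_right hMc hk0'
    have A2 : Real.sqrt 2 * S * Real.sqrt k ≤ 2 * (Real.sqrt k * S) := by
      have h := mul_le_mul_of_nonneg_right h2le (mul_nonneg hS0 hk0')
      calc Real.sqrt 2 * S * Real.sqrt k = Real.sqrt 2 * (S * Real.sqrt k) := by ring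
        _ ≤ 2 * (S * Real.sqrt k) := h
        _ = 2 * (Real.sqrt k * S) := by ring
    have A3 : (4+3*γ)*(M*Real.sqrt c) ≤ (4+3*γ)*(Real.sqrt 2 * S) :=
      mul_le_mul_of_nonneg_left hMc (by linarith)
    have A4 : (4+3*γ)*(Real.sqrt 2 * S) ≤ (4+3*γ)*(Real.sqrt 2 * (Real.sqrt a * Real.sqrt b)) := by
      apply mul_le_mul_of_nonneg_left _ (by linarith)
      exact mul_le_mul_of_nonneg_left hr2 (le_of_lt h2pos)
    have hkS : 0 ≤ Real.sqrt k * S := by positivity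
    rw [hc₀def]
    linarith [A1, A2, A3, A4, hcab, hkS, huv0, mul_nonneg (mul_nonneg (by linarith : (0:ℝ) ≤ 4+3*γ) (le_of_lt h2pos)) hkS]
  have hΛfin : Λ ≤ c₀ * (Real.sqrt a * Real.sqrt b + Real.sqrt k * S) := hΛD.trans hDbound
  -- conclude via H1 bound
  have hH1 : H1norm lam ≤ Real.sqrt 2 * Λ := by
    have hint : (∫ s in (0:ℝ)..1, (‖lam s‖^2 + ‖L1 s‖^2)) ≤ 2*l := by
      have hsplit : (∫ s in (0:ℝ)..1, (‖lam s‖^2 + ‖L1 s‖^2))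
          = (∫ s in (0:ℝ)..1, ‖lam s‖^2) + ∫ s in (0:ℝ)..1, ‖L1 s‖^2 :=
        intervalIntegral.integral_add
          ((hlam.continuous.norm.pow 2).intervalIntegrable _ _)
          ((cL1.norm.pow 2).intervalIntegrable _ _)
      have h1 : (∫ s in (0:ℝ)..1, ‖lam s‖^2) ≤ l := by
        have := intervalIntegral.integral_mono_on (μ := volume) (by norm_num : (0:ℝ) ≤ 1)
          ((hlam.continuous.norm.pow 2).intervalIntegrable _ _)
          (intervalIntegrable_const)
          (fun s hs => by
            have h := hlamptw s hs
            have : ‖lam s‖^2 ≤ Λ^2 := by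
              rw [Real.norm_eq_abs]
              exact pow_le_pow_left₀ (abs_nonneg _) h 2
            rwa [hΛdef, Real.sq_sqrt hl0'] at this)
        simpa using this
      have h2 : (∫ s in (0:ℝ)..1, ‖L1 s‖^2) = l :=
        intervalIntegral.integral_congr (fun s _ => by rw [Real.norm_eq_abs, sq_abs])
      rw [hsplit, h2]; linarith
    rw [H1norm]
    calc Real.sqrt (∫ s in (0:ℝ)..1, (‖lam s‖^2 + ‖L1 s‖^2)) ≤ Real.sqrt (2*l) :=
          Real.sqrt_le_sqrt (by linarith)
      _ = Real.sqrt 2 * Λ := Real.sqrt_mul (by norm_num) _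
  calc H1norm lam ≤ Real.sqrt 2 * Λ := hH1
    _ ≤ Real.sqrt 2 * (c₀ * (Real.sqrt a * Real.sqrt b + Real.sqrt k * S)) :=
        mul_le_mul_of_nonneg_left hΛfin (le_of_lt h2pos)
    _ = Real.sqrt 2 * c₀ * (L2norm X2 * L2norm X4
          + L2norm κ₃ * (L2norm X2)^((5:ℝ)/4) * (L2norm X4)^((3:ℝ)/4)) := by
        rw [hA, hB, hK, hSdef]; ring
end
end

section
/- Let T > 0 and let X, e₁, e₂ : ℝ × (0,T) → ℝ³ and ω : ℝ × (0,T) → ℝ be smooth maps such that for all (s,t): |∂_sX(s,t)| = 1, |e₁| = |e₂| = 1, e₁·e₂ = 0, e₁·∂_sX = 0, e₂·∂_sX = 0, e₂ = ∂_sX × e₁, and the frame evolves by ∂_te₁ = e₂ × (∂_s∂_tX) + ω e₂ and ∂_te₂ = −e₁ × (∂_s∂_tX) − ω e₁. Then the twist κ₃ := (∂_se₁)·e₂ satisfies, at every (s,t): ∂_tκ₃ = (∂_s∂_tX)·(∂_sX × ∂_s²X) + ∂_sω. -/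
open MeasureTheory Set
open scoped RealInnerProductSpace

noncomputable section

/-! ### Auxiliary lemmas -/

lemma cross3_apply (a b : E3) (i : Fin 3) :
    cross3 a b i = ![a 1 * b 2 - a 2 * b 1, a 2 * b 0 - a 0 * b 2, a 0 * b 1 - a 1 * b 0] i := rfl

lemma inner3 (a b : E3) : ⟪a, b⟫ = a 0 * b 0 + a 1 * b 1 + a 2 * b 2 := by
  simp [PiLp.inner_apply, Fin.sum_univ_three, mul_comm]

lemma inner_cross3_self_left (a b : E3) : ⟪cross3 a b, a⟫ = (0:ℝ) := by
  simp [inner3, cross3_apply, Fin.sum_univ_three]; ring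

lemma hasDerivAt_E3 {f : ℝ → E3} {f' : E3} {x : ℝ}
    (h : ∀ i, HasDerivAt (fun y => f y i) (f' i) x) : HasDerivAt f f' x := by
  have h2 : HasDerivAt (fun y => (fun i => f y i : Fin 3 → ℝ)) (fun i => f' i) x :=
    hasDerivAt_pi.mpr h
  exact ((PiLp.continuousLinearEquiv 2 ℝ (fun _ : Fin 3 => ℝ)).symm :
      (Fin 3 → ℝ) →L[ℝ] E3).hasFDerivAt.comp_hasDerivAt x h2

lemma hasDerivAt_proj {f : ℝ → E3} {f' : E3} {x : ℝ} (h : HasDerivAt f f' x) (i : Fin 3) :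
    HasDerivAt (fun y => f y i) (f' i) x :=
  (EuclideanSpace.proj i : E3 →L[ℝ] ℝ).hasFDerivAt.comp_hasDerivAt x h

lemma hasDerivAt_cross {f g : ℝ → E3} {f' g' : E3} {x : ℝ}
    (hf : HasDerivAt f f' x) (hg : HasDerivAt g g' x) :
    HasDerivAt (fun y => cross3 (f y) (g y)) (cross3 f' (g x) + cross3 (f x) g') x := by
  apply hasDerivAt_E3
  intro i
  have h0 := hasDerivAt_proj hf 0; have h1 := hasDerivAt_proj hf 1; have h2 := hasDerivAt_proj hf 2
  have k0 := hasDerivAt_proj hg 0; have k1 := hasDerivAt_proj hg 1; have k2 := hasDerivAt_proj hg 2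
  fin_cases i
  · simp only [cross3_apply, PiLp.add_apply, Matrix.cons_val_zero, Matrix.cons_val_one,
      Matrix.head_cons, Matrix.cons_val_two, Matrix.tail_cons]
    exact ((h1.mul k2).sub (h2.mul k1)).congr_deriv (by simp [cross3_apply]; ring)
  · simp only [cross3_apply, PiLp.add_apply, Matrix.cons_val_zero, Matrix.cons_val_one,
      Matrix.head_cons, Matrix.cons_val_two, Matrix.tail_cons]
    exact ((h2.mul k0).sub (h0.mul k2)).congr_deriv (by simp [cross3_apply]; ring)
  · simp only [cross3_apply, PiLp.add_apply, Matrix.cons_val_zero, Matrix.cons_val_one,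
      Matrix.head_cons, Matrix.cons_val_two, Matrix.tail_cons]
    exact ((h0.mul k1).sub (h1.mul k0)).congr_deriv (by simp [cross3_apply]; ring)

lemma wtop1 : (1 : WithTop ℕ∞) ≤ ((⊤:ℕ∞) : WithTop ℕ∞) := by exact_mod_cast le_top
lemma wtop2 : (2 : WithTop ℕ∞) ≤ ((⊤:ℕ∞) : WithTop ℕ∞) := by
  have : ((2:ℕ) : WithTop ℕ∞) ≤ ((⊤:ℕ∞) : WithTop ℕ∞) := by
    rw [show ((2:ℕ) : WithTop ℕ∞) = (((2:ℕ):ℕ∞) : WithTop ℕ∞) by norm_cast]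
    exact WithTop.coe_le_coe.mpr le_top
  simpa using this
lemma wtopS : ((⊤:ℕ∞) : WithTop ℕ∞) + 1 ≤ ((⊤:ℕ∞) : WithTop ℕ∞) := by
  have : ((⊤:ℕ∞) : WithTop ℕ∞) + 1 = ((⊤:ℕ∞) : WithTop ℕ∞) := by
    exact_mod_cast (top_add 1 : (⊤:ℕ∞) + 1 = ⊤)
  rw [this]

section PD
variable {E : Type*} [NormedAddCommGroup E] [NormedSpace ℝ E]

lemma hasDerivAt_uncurry_fst {F : ℝ × ℝ → E} (hF : ContDiff ℝ (⊤:ℕ∞) F) (s t : ℝ) :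
    HasDerivAt (fun u => F (u, t)) (fderiv ℝ F (s, t) (1, 0)) s :=
  ((hF.differentiable (by simp) (s, t)).hasFDerivAt).comp_hasDerivAt s
    ((hasDerivAt_id s).prodMk (hasDerivAt_const s t))

lemma hasDerivAt_uncurry_snd {F : ℝ × ℝ → E} (hF : ContDiff ℝ (⊤:ℕ∞) F) (s t : ℝ) :
    HasDerivAt (fun τ => F (s, τ)) (fderiv ℝ F (s, t) (0, 1)) t :=
  ((hF.differentiable (by simp) (s, t)).hasFDerivAt).comp_hasDerivAt t
    ((hasDerivAt_const t s).prodMk (hasDerivAt_id t))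

lemma contDiff_fderiv_apply {F : ℝ × ℝ → E} (hF : ContDiff ℝ (⊤:ℕ∞) F) (v : ℝ × ℝ) :
    ContDiff ℝ (⊤:ℕ∞) (fun p => fderiv ℝ F p v) :=
  (hF.fderiv_right wtopS).clm_apply contDiff_const

lemma contDiff_pd1 {f : ℝ → ℝ → E} (hf : ContDiff ℝ (⊤:ℕ∞) (Function.uncurry f)) :
    ContDiff ℝ (⊤:ℕ∞) (Function.uncurry (fun a b => deriv (fun u => f u b) a)) := by
  have : Function.uncurry (fun a b => deriv (fun u => f u b) a)
      = fun p => fderiv ℝ (Function.uncurry f) p (1, 0) := by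
    funext p
    exact (hasDerivAt_uncurry_fst hf p.1 p.2).deriv
  rw [this]; exact contDiff_fderiv_apply hf (1, 0)

lemma contDiff_pd2 {f : ℝ → ℝ → E} (hf : ContDiff ℝ (⊤:ℕ∞) (Function.uncurry f)) :
    ContDiff ℝ (⊤:ℕ∞) (Function.uncurry (fun a b => deriv (fun τ => f a τ) b)) := by
  have : Function.uncurry (fun a b => deriv (fun τ => f a τ) b)
      = fun p => fderiv ℝ (Function.uncurry f) p (0, 1) := by
    funext p
    exact (hasDerivAt_uncurry_snd hf p.1 p.2).deriv
  rw [this]; exact contDiff_fderiv_apply hf (0, 1)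

lemma hasDerivAt_fst' {f : ℝ → ℝ → E} (hf : ContDiff ℝ (⊤:ℕ∞) (Function.uncurry f)) (s t : ℝ) :
    HasDerivAt (fun u => f u t) (deriv (fun u => f u t) s) s := by
  have h : HasDerivAt (fun u => f u t) (fderiv ℝ (Function.uncurry f) (s, t) (1, 0)) s :=
    hasDerivAt_uncurry_fst hf s t
  rw [h.deriv]; exact h

lemma hasDerivAt_snd' {f : ℝ → ℝ → E} (hf : ContDiff ℝ (⊤:ℕ∞) (Function.uncurry f)) (s t : ℝ) :
    HasDerivAt (fun τ => f s τ) (deriv (fun τ => f s τ) t) t := by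
  have h : HasDerivAt (fun τ => f s τ) (fderiv ℝ (Function.uncurry f) (s, t) (0, 1)) t :=
    hasDerivAt_uncurry_snd hf s t
  rw [h.deriv]; exact h

/-- Clairaut / Schwarz for smooth functions of two real variables. -/
lemma deriv_swap {f : ℝ → ℝ → E} (hf : ContDiff ℝ (⊤:ℕ∞) (Function.uncurry f)) (s t : ℝ) :
    deriv (fun τ => deriv (fun u => f u τ) s) t = deriv (fun u => deriv (fun τ => f u τ) t) s := by
  have hsym : IsSymmSndFDerivAt ℝ (Function.uncurry f) (s, t) :=
    ContDiffAt.isSymmSndFDerivAt hf.contDiffAt (by simp [minSmoothness_of_isRCLikeNormedField]; exact wtop2)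
  have hfd : ContDiff ℝ (⊤:ℕ∞) (fderiv ℝ (Function.uncurry f)) := hf.fderiv_right wtopS
  have L1 : deriv (fun τ => deriv (fun u => f u τ) s) t
      = fderiv ℝ (fderiv ℝ (Function.uncurry f)) (s, t) (0, 1) (1, 0) := by
    have e1 : (fun τ => deriv (fun u => f u τ) s)
        = fun τ => fderiv ℝ (Function.uncurry f) (s, τ) (1, 0) := by
      funext τ; exact (hasDerivAt_uncurry_fst hf s τ).deriv
    rw [e1]
    exact (((hasDerivAt_uncurry_snd hfd s t).clm_apply
      (hasDerivAt_const t ((1:ℝ), (0:ℝ)))).congr_deriv (by simp)).deriv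
  have L2 : deriv (fun u => deriv (fun τ => f u τ) t) s
      = fderiv ℝ (fderiv ℝ (Function.uncurry f)) (s, t) (1, 0) (0, 1) := by
    have e2 : (fun u => deriv (fun τ => f u τ) t)
        = fun u => fderiv ℝ (Function.uncurry f) (u, t) (0, 1) := by
      funext u; exact (hasDerivAt_uncurry_snd hf u t).deriv
    rw [e2]
    exact (((hasDerivAt_uncurry_fst hfd s t).clm_apply
      (hasDerivAt_const s ((0:ℝ), (1:ℝ)))).congr_deriv (by simp)).deriv
  rw [L1, L2, hsym.eq]

end PD

section InnerHelp
variable {E : Type*} [NormedAddCommGroup E] [InnerProductSpace ℝ E]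

lemma inner_deriv_zero_eventually {f g : ℝ → E} {f' g' : E} {x c : ℝ}
    (hf : HasDerivAt f f' x) (hg : HasDerivAt g g' x)
    (hc : ∀ᶠ y in nhds x, ⟪f y, g y⟫ = c) :
    ⟪f x, g'⟫ + ⟪f', g x⟫ = 0 := by
  have h1 := HasDerivAt.inner ℝ hf hg
  have h2 : HasDerivAt (fun y => ⟪f y, g y⟫) 0 x :=
    (hasDerivAt_const x c).congr_of_eventuallyEq hc
  simpa using h1.unique h2

lemma inner_deriv_zero {f g : ℝ → E} {f' g' : E} {x c : ℝ}
    (hf : HasDerivAt f f' x) (hg : HasDerivAt g g' x)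
    (hc : ∀ y, ⟪f y, g y⟫ = c) :
    ⟪f x, g'⟫ + ⟪f', g x⟫ = 0 :=
  inner_deriv_zero_eventually hf hg (Filter.Eventually.of_forall hc)

end InnerHelp
lemma key_algebra (Tv E1 dT dE1 Q : E3)
    (h1 : ⟪Tv, Tv⟫ = (1:ℝ)) (h2 : ⟪E1, E1⟫ = (1:ℝ)) (h3 : ⟪Tv, E1⟫ = (0:ℝ))
    (h4 : ⟪Tv, dT⟫ = (0:ℝ)) (h6 : ⟪Q, Tv⟫ = (0:ℝ))
    (h7 : ⟪dE1, Tv⟫ + ⟪E1, dT⟫ = (0:ℝ)) :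
    ⟪cross3 (cross3 dT E1 + cross3 Tv dE1) Q, cross3 Tv E1⟫ - ⟪dE1, cross3 E1 Q⟫
      = ⟪Q, cross3 Tv dT⟫ := by
  simp only [inner3, cross3_apply, PiLp.add_apply, Matrix.cons_val_zero, Matrix.cons_val_one,
    Matrix.head_cons, Matrix.cons_val_two, Matrix.tail_cons] at h1 h2 h3 h4 h6 h7 ⊢
  linear_combination ((1) * (E1 2)^3 * (dE1 1) * (Q 0) + (-1) * (E1 2)^3 * (dE1 0) * (Q 1) + (-1) * (E1 1) * (E1 2)^2 * (dE1 2) * (Q 0) + (1) * (E1 1) * (E1 2)^2 * (dE1 0) * (Q 2) + (1) * (E1 1)^2 * (E1 2) * (dE1 1) * (Q 0) + (-1) * (E1 1)^2 * (E1 2) * (dE1 0) * (Q 1) + (-1) * (E1 1)^3 * (dE1 2) * (Q 0) + (1) * (E1 1)^3 * (dE1 0) * (Q 2) + (1) * (E1 0) * (E1 2)^2 * (dE1 2) * (Q 1) + (-1) * (E1 0) * (E1 2)^2 * (dE1 1) * (Q 2) + (1) * (E1 0) * (E1 1)^2 * (dE1 2) * (Q 1) + (-1) * (E1 0) * (E1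 1)^2 * (dE1 1) * (Q 2) + (1) * (E1 0)^2 * (E1 2) * (dE1 1) * (Q 0) + (-1) * (E1 0)^2 * (E1 2) * (dE1 0) * (Q 1) + (-1) * (E1 0)^2 * (E1 1) * (dE1 2) * (Q 0) + (1) * (E1 0)^2 * (E1 1) * (dE1 0) * (Q 2) + (1) * (E1 0)^3 * (dE1 2) * (Q 1) + (-1) * (E1 0)^3 * (dE1 1) * (Q 2) + (-1) * (Tv 2) * (E1 2)^2 * (dT 1) * (Q 0) + (1) * (Tv 2) * (E1 2)^2 * (dT 0) * (Q 1) + (1) * (Tv 2) * (E1 1) * (E1 2) * (dT 2) * (Q 0) + (-1) * (Tv 2) * (E1 1) * (E1 2) * (dT 0) * (Q 2) + (-1) * (Tv 2) * (E1 0) * (E1 2) * (dT 2) * (Q 1) + (1) * (Tv 2) * (E1 0) * (E1 2) * (dT 1) * (Q 2) + (-1) * (Tv 1) * (E1 1) * (E1 2) * (dT 1) * (Q 0) + (1) * (Tv 1) * (E1 1) * (E1 2) * (dT 0) * (Q 1) + (1) * (Tv 1) * (E1 1)^2 * (dT 2) * (Q 0) + (-1) * (Tv 1) * (E1 1)^2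 * (dT 0) * (Q 2) + (-1) * (Tv 1) * (E1 0) * (E1 1) * (dT 2) * (Q 1) + (1) * (Tv 1) * (E1 0) * (E1 1) * (dT 1) * (Q 2) + (-1) * (Tv 0) * (E1 0) * (E1 2) * (dT 1) * (Q 0) + (1) * (Tv 0) * (E1 0) * (E1 2) * (dT 0) * (Q 1) + (1) * (Tv 0) * (E1 0) * (E1 1) * (dT 2) * (Q 0) + (-1) * (Tv 0) * (E1 0) * (E1 1) * (dT 0) * (Q 2) + (-1) * (Tv 0) * (E1 0)^2 * (dT 2) * (Q 1) + (1) * (Tv 0) * (E1 0)^2 * (dT 1) * (Q 2)) * h1 + ((1) * (E1 2) * (dE1 1) * (Q 0) + (-1) * (E1 2) * (dE1 0) * (Q 1) + (-1) * (E1 1) * (dE1 2) * (Q 0) + (1) * (E1 1) * (dE1 0) * (Q 2) + (1) * (E1 0) * (dE1 2) * (Q 1) + (-1) * (E1 0) * (dE1 1) * (Q 2) + (-1) * (Tv 2) * (dT 1) * (Q 0) + (1) * (Tv 2) * (dT 0) * (Q 1) + (-1) * (Tv 2) * (E1 1) * (E1 2) * (dT 2) * (Q 0) + (-1) * (Tv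 2) * (E1 1)^2 * (dT 1) * (Q 0) + (1) * (Tv 2) * (E1 0) * (E1 2) * (dT 2) * (Q 1) + (1) * (Tv 2) * (E1 0) * (E1 1) * (dT 1) * (Q 1) + (-1) * (Tv 2) * (E1 0) * (E1 1) * (dT 0) * (Q 0) + (1) * (Tv 2) * (E1 0)^2 * (dT 0) * (Q 1) + (1) * (Tv 1) * (dT 2) * (Q 0) + (-1) * (Tv 1) * (dT 0) * (Q 2) + (1) * (Tv 1) * (E1 2)^2 * (dT 2) * (Q 0) + (1) * (Tv 1) * (E1 1) * (E1 2) * (dT 1) * (Q 0) + (-1) * (Tv 1) * (E1 0) * (E1 2) * (dT 2) * (Q 2) + (1) * (Tv 1) * (E1 0) * (E1 2) * (dT 0) * (Q 0) + (-1) * (Tv 1) * (E1 0) * (E1 1) * (dT 1) * (Q 2) + (-1) * (Tv 1) * (E1 0)^2 * (dT 0) * (Q 2) + (-1) * (Tv 0) * (dT 2) * (Q 1) + (1) * (Tv 0) * (dT 1) * (Q 2) + (-1) * (Tv 0) * (E1 2)^2 * (dT 2) * (Q 1) + (1) * (Tv 0) * (E1 1) * (E1 2) * (dT 2) * (Q 2)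 + (-1) * (Tv 0) * (E1 1) * (E1 2) * (dT 1) * (Q 1) + (1) * (Tv 0) * (E1 1)^2 * (dT 1) * (Q 2) + (-1) * (Tv 0) * (E1 0) * (E1 2) * (dT 0) * (Q 1) + (1) * (Tv 0) * (E1 0) * (E1 1) * (dT 0) * (Q 2)) * h2 + ((-1) * (Tv 2) * (E1 2)^2 * (dE1 1) * (Q 0) + (1) * (Tv 2) * (E1 2)^2 * (dE1 0) * (Q 1) + (-1) * (Tv 2) * (E1 1)^2 * (dE1 1) * (Q 0) + (1) * (Tv 2) * (E1 1)^2 * (dE1 0) * (Q 1) + (-1) * (Tv 2) * (E1 0)^2 * (dE1 1) * (Q 0) + (1) * (Tv 2) * (E1 0)^2 * (dE1 0) * (Q 1) + (1) * (Tv 2)^2 * (E1 2) * (dT 1) * (Q 0) + (-1) * (Tv 2)^2 * (E1 2) * (dT 0) * (Q 1) + (1) * (Tv 1) * (E1 2)^2 * (dE1 2) * (Q 0) + (-1) * (Tv 1) * (E1 2)^2 * (dE1 0) * (Q 2) + (1) * (Tv 1) * (E1 1)^2 * (dE1 2) * (Q 0) + (-1) * (Tv 1) * (E1 1)^2 * (dE1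 0) * (Q 2) + (1) * (Tv 1) * (E1 0)^2 * (dE1 2) * (Q 0) + (-1) * (Tv 1) * (E1 0)^2 * (dE1 0) * (Q 2) + (-1) * (Tv 1) * (Tv 2) * (E1 2) * (dT 2) * (Q 0) + (1) * (Tv 1) * (Tv 2) * (E1 2) * (dT 0) * (Q 2) + (1) * (Tv 1) * (Tv 2) * (E1 1) * (dT 1) * (Q 0) + (-1) * (Tv 1) * (Tv 2) * (E1 1) * (dT 0) * (Q 1) + (-1) * (Tv 1)^2 * (E1 1) * (dT 2) * (Q 0) + (1) * (Tv 1)^2 * (E1 1) * (dT 0) * (Q 2) + (-1) * (Tv 0) * (E1 2)^2 * (dE1 2) * (Q 1) + (1) * (Tv 0) * (E1 2)^2 * (dE1 1) * (Q 2) + (-1) * (Tv 0) * (E1 1)^2 * (dE1 2) * (Q 1) + (1) * (Tv 0) * (E1 1)^2 * (dE1 1) * (Q 2) + (-1) * (Tv 0) * (E1 0)^2 * (dE1 2) * (Q 1) + (1) * (Tv 0) * (E1 0)^2 * (dE1 1) * (Q 2) + (1) * (Tv 0) * (Tv 2) * (E1 2) * (dT 2) * (Q 1) + (-1) * (Tv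 0) * (Tv 2) * (E1 2) * (dT 1) * (Q 2) + (1) * (Tv 0) * (Tv 2) * (E1 0) * (dT 1) * (Q 0) + (-1) * (Tv 0) * (Tv 2) * (E1 0) * (dT 0) * (Q 1) + (1) * (Tv 0) * (Tv 1) * (E1 1) * (dT 2) * (Q 1) + (-1) * (Tv 0) * (Tv 1) * (E1 1) * (dT 1) * (Q 2) + (-1) * (Tv 0) * (Tv 1) * (E1 0) * (dT 2) * (Q 0) + (1) * (Tv 0) * (Tv 1) * (E1 0) * (dT 0) * (Q 2) + (1) * (Tv 0)^2 * (E1 0) * (dT 2) * (Q 1) + (-1) * (Tv 0)^2 * (E1 0) * (dT 1) * (Q 2)) * h3 + ((-1) * (Tv 2)^2 * (E1 1) * (E1 2) * (Q 0) + (1) * (Tv 2)^2 * (E1 0) * (E1 2) * (Q 1) + (1) * (Tv 1) * (Tv 2) * (E1 2)^2 * (Q 0) + (-1) * (Tv 1) * (Tv 2) * (E1 1)^2 * (Q 0) + (-1) * (Tv 1) * (Tv 2) * (E1 0) * (E1 2) * (Q 2) + (1) * (Tv 1) * (Tv 2) * (E1 0) * (E1 1) * (Q 1) + (1) * (Tv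 1)^2 * (E1 1) * (E1 2) * (Q 0) + (-1) * (Tv 1)^2 * (E1 0) * (E1 1) * (Q 2) + (-1) * (Tv 0) * (Tv 2) * (E1 2)^2 * (Q 1) + (1) * (Tv 0) * (Tv 2) * (E1 1) * (E1 2) * (Q 2) + (-1) * (Tv 0) * (Tv 2) * (E1 0) * (E1 1) * (Q 0) + (1) * (Tv 0) * (Tv 2) * (E1 0)^2 * (Q 1) + (-1) * (Tv 0) * (Tv 1) * (E1 1) * (E1 2) * (Q 1) + (1) * (Tv 0) * (Tv 1) * (E1 1)^2 * (Q 2) + (1) * (Tv 0) * (Tv 1) * (E1 0) * (E1 2) * (Q 0) + (-1) * (Tv 0) * (Tv 1) * (E1 0)^2 * (Q 2) + (-1) * (Tv 0)^2 * (E1 0) * (E1 2) * (Q 1) + (1) * (Tv 0)^2 * (E1 0) * (E1 1) * (Q 2)) * h4 + ((-1) * (Tv 2) * (E1 1) * (dE1 0) + (-1) * (Tv 2) * (E1 1) * (E1 2)^2 * (dE1 0) + (-1) * (Tv 2) * (E1 1)^3 * (dE1 0) + (1) * (Tv 2) * (E1 0) * (dE1 1) + (1) * (Tv 2) * (E1 0)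 * (E1 2)^2 * (dE1 1) + (1) * (Tv 2) * (E1 0) * (E1 1)^2 * (dE1 1) + (-1) * (Tv 2) * (E1 0)^2 * (E1 1) * (dE1 0) + (1) * (Tv 2) * (E1 0)^3 * (dE1 1) + (1) * (Tv 2)^2 * (E1 1) * (E1 2) * (dT 0) + (-1) * (Tv 2)^2 * (E1 0) * (E1 2) * (dT 1) + (1) * (Tv 1) * (E1 2) * (dE1 0) + (1) * (Tv 1) * (E1 2)^3 * (dE1 0) + (1) * (Tv 1) * (E1 1)^2 * (E1 2) * (dE1 0) + (-1) * (Tv 1) * (E1 0) * (dE1 2) + (-1) * (Tv 1) * (E1 0) * (E1 2)^2 * (dE1 2) + (-1) * (Tv 1) * (E1 0) * (E1 1)^2 * (dE1 2) + (1) * (Tv 1) * (E1 0)^2 * (E1 2) * (dE1 0) + (-1) * (Tv 1) * (E1 0)^3 * (dE1 2) + (-1) * (Tv 1) * (Tv 2) * (E1 2)^2 * (dT 0) + (1) * (Tv 1) * (Tv 2) * (E1 1)^2 * (dT 0) + (1) * (Tv 1) * (Tv 2) * (E1 0) * (E1 2) * (dT 2) + (-1) * (Tv 1) * (Tv 2)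 * (E1 0) * (E1 1) * (dT 1) + (-1) * (Tv 1)^2 * (E1 1) * (E1 2) * (dT 0) + (1) * (Tv 1)^2 * (E1 0) * (E1 1) * (dT 2) + (-1) * (Tv 0) * (E1 2) * (dE1 1) + (-1) * (Tv 0) * (E1 2)^3 * (dE1 1) + (1) * (Tv 0) * (E1 1) * (dE1 2) + (1) * (Tv 0) * (E1 1) * (E1 2)^2 * (dE1 2) + (-1) * (Tv 0) * (E1 1)^2 * (E1 2) * (dE1 1) + (1) * (Tv 0) * (E1 1)^3 * (dE1 2) + (-1) * (Tv 0) * (E1 0)^2 * (E1 2) * (dE1 1) + (1) * (Tv 0) * (E1 0)^2 * (E1 1) * (dE1 2) + (1) * (Tv 0) * (Tv 2) * (E1 2)^2 * (dT 1) + (-1) * (Tv 0) * (Tv 2) * (E1 1) * (E1 2) * (dT 2) + (1) * (Tv 0) * (Tv 2) * (E1 0) * (E1 1) * (dT 0) + (-1) * (Tv 0) * (Tv 2) * (E1 0)^2 * (dT 1) + (1) * (Tv 0) * (Tv 1) * (E1 1) * (E1 2) * (dT 1) + (-1) * (Tv 0) * (Tv 1) * (E1 1)^2 * (dT 2) + (-1)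 * (Tv 0) * (Tv 1) * (E1 0) * (E1 2) * (dT 0) + (1) * (Tv 0) * (Tv 1) * (E1 0)^2 * (dT 2) + (1) * (Tv 0)^2 * (E1 0) * (E1 2) * (dT 1) + (-1) * (Tv 0)^2 * (E1 0) * (E1 1) * (dT 2)) * h6 + ((1) * (Tv 2) * (E1 1) * (E1 2)^2 * (Q 0) + (1) * (Tv 2) * (E1 1)^3 * (Q 0) + (-1) * (Tv 2) * (E1 0) * (E1 2)^2 * (Q 1) + (-1) * (Tv 2) * (E1 0) * (E1 1)^2 * (Q 1) + (1) * (Tv 2) * (E1 0)^2 * (E1 1) * (Q 0) + (-1) * (Tv 2) * (E1 0)^3 * (Q 1) + (-1) * (Tv 1) * (E1 2)^3 * (Q 0) + (-1) * (Tv 1) * (E1 1)^2 * (E1 2) * (Q 0) + (1) * (Tv 1) * (E1 0) * (E1 2)^2 * (Q 2) + (1) * (Tv 1) * (E1 0) * (E1 1)^2 * (Q 2) + (-1) * (Tv 1) * (E1 0)^2 * (E1 2) * (Q 0) + (1) * (Tv 1) * (E1 0)^3 * (Q 2) + (1) * (Tv 0) * (E1 2)^3 * (Q 1) + (-1) * (Tv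 0) * (E1 1) * (E1 2)^2 * (Q 2) + (1) * (Tv 0) * (E1 1)^2 * (E1 2) * (Q 1) + (-1) * (Tv 0) * (E1 1)^3 * (Q 2) + (1) * (Tv 0) * (E1 0)^2 * (E1 2) * (Q 1) + (-1) * (Tv 0) * (E1 0)^2 * (E1 1) * (Q 2)) * h7

/-- kinematic identity for the twist `κ₃ = (∂ₛe₁)·e₂` of a
material frame along an evolving inextensible curve. -/
theorem twist_kinematics (T : ℝ) (hT : 0 < T)
    (X e₁ e₂ : ℝ → ℝ → E3) (ω : ℝ → ℝ → ℝ)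
    (hX : ContDiff ℝ (⊤ : ℕ∞) (Function.uncurry X))
    (he₁ : ContDiff ℝ (⊤ : ℕ∞) (Function.uncurry e₁))
    (he₂ : ContDiff ℝ (⊤ : ℕ∞) (Function.uncurry e₂))
    (hω : ContDiff ℝ (⊤ : ℕ∞) (Function.uncurry ω))
    (hinext : ∀ (s : ℝ), ∀ t ∈ Ioo (0:ℝ) T, ‖deriv (fun u => X u t) s‖ = 1)
    (hn1 : ∀ (s : ℝ), ∀ t ∈ Ioo (0:ℝ) T, ‖e₁ s t‖ = 1)
    (hn2 : ∀ (s : ℝ), ∀ t ∈ Ioo (0:ℝ) T, ‖e₂ s t‖ = 1)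
    (h12 : ∀ (s : ℝ), ∀ t ∈ Ioo (0:ℝ) T, ⟪e₁ s t, e₂ s t⟫ = (0:ℝ))
    (h1t : ∀ (s : ℝ), ∀ t ∈ Ioo (0:ℝ) T, ⟪e₁ s t, deriv (fun u => X u t) s⟫ = (0:ℝ))
    (h2t : ∀ (s : ℝ), ∀ t ∈ Ioo (0:ℝ) T, ⟪e₂ s t, deriv (fun u => X u t) s⟫ = (0:ℝ))
    (he2def : ∀ (s : ℝ), ∀ t ∈ Ioo (0:ℝ) T,
      e₂ s t = cross3 (deriv (fun u => X u t) s) (e₁ s t))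
    (hev1 : ∀ (s : ℝ), ∀ t ∈ Ioo (0:ℝ) T,
      deriv (fun τ => e₁ s τ) t =
        cross3 (e₂ s t) (deriv (fun u => deriv (fun τ => X u τ) t) s)
          + ω s t • e₂ s t)
    (hev2 : ∀ (s : ℝ), ∀ t ∈ Ioo (0:ℝ) T,
      deriv (fun τ => e₂ s τ) t =
        -cross3 (e₁ s t) (deriv (fun u => deriv (fun τ => X u τ) t) s)
          - ω s t • e₁ s t) :
    ∀ (s : ℝ), ∀ t ∈ Ioo (0:ℝ) T,
      deriv (fun τ => ⟪deriv (fun u => e₁ u τ) s, e₂ s τ⟫) t =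
        ⟪deriv (fun u => deriv (fun τ => X u τ) t) s,
          cross3 (deriv (fun u => X u t) s) (iteratedDeriv 2 (fun u => X u t) s)⟫
        + deriv (fun u => ω u t) s := by
  intro s t ht
  -- derivatives in the first variable, at `(s, t)`
  have hE1 : HasDerivAt (fun u => e₁ u t) (deriv (fun u => e₁ u t) s) s :=
    hasDerivAt_fst' he₁ s t
  have hE2 : HasDerivAt (fun u => e₂ u t) (deriv (fun u => e₂ u t) s) s :=
    hasDerivAt_fst' he₂ s t
  have hTv : HasDerivAt (fun u => deriv (fun v => X v t) u)
      (deriv (fun u => deriv (fun v => X v t) u) s) s :=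
    hasDerivAt_fst' (f := fun a b => deriv (fun v => X v b) a) (contDiff_pd1 hX) s t
  have hQf : HasDerivAt (fun u => deriv (fun v => deriv (fun τ => X v τ) t) u)
      (deriv (fun u => deriv (fun v => deriv (fun τ => X v τ) t) u) s) s :=
    hasDerivAt_fst' (f := fun a b => deriv (fun v => deriv (fun τ => X v τ) b) a)
      (contDiff_pd1 (contDiff_pd2 hX)) s t
  have hωs : HasDerivAt (fun u => ω u t) (deriv (fun u => ω u t) s) s :=
    hasDerivAt_fst' hω s t
  -- abbreviations (as plain equalities would be unreadable; we keep full terms)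
  -- unit/orthogonality scalar facts
  have hTT : ⟪deriv (fun u => X u t) s, deriv (fun u => X u t) s⟫ = (1:ℝ) := by
    rw [real_inner_self_eq_norm_mul_norm, hinext s t ht]; norm_num
  have hee : ⟪e₁ s t, e₁ s t⟫ = (1:ℝ) := by
    rw [real_inner_self_eq_norm_mul_norm, hn1 s t ht]; norm_num
  have he2e2 : ⟪e₂ s t, e₂ s t⟫ = (1:ℝ) := by
    rw [real_inner_self_eq_norm_mul_norm, hn2 s t ht]; norm_num
  have hTe : ⟪deriv (fun u => X u t) s, e₁ s t⟫ = (0:ℝ) := by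
    rw [real_inner_comm]; exact h1t s t ht
  -- ⟪∂ₛe₁, e₁⟫ = 0
  have o1 : ⟪deriv (fun u => e₁ u t) s, e₁ s t⟫ = (0:ℝ) := by
    have h := inner_deriv_zero hE1 hE1 (c := 1) (fun u => by
      rw [real_inner_self_eq_norm_mul_norm, hn1 u t ht]; norm_num)
    have hc : ⟪e₁ s t, deriv (fun u => e₁ u t) s⟫ = ⟪deriv (fun u => e₁ u t) s, e₁ s t⟫ :=
      real_inner_comm _ _
    linarith [h, hc]
  -- ⟪∂ₛe₂, e₂⟫ = 0
  have o2 : ⟪deriv (fun u => e₂ u t) s, e₂ s t⟫ = (0:ℝ) := by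
    have h := inner_deriv_zero hE2 hE2 (c := 1) (fun u => by
      rw [real_inner_self_eq_norm_mul_norm, hn2 u t ht]; norm_num)
    have hc : ⟪e₂ s t, deriv (fun u => e₂ u t) s⟫ = ⟪deriv (fun u => e₂ u t) s, e₂ s t⟫ :=
      real_inner_comm _ _
    linarith [h, hc]
  -- ⟪T, ∂ₛT⟫ = 0
  have hTdT : ⟪deriv (fun u => X u t) s, deriv (fun u => deriv (fun v => X v t) u) s⟫ = (0:ℝ) := by
    have h := inner_deriv_zero hTv hTv (c := 1) (fun u => by
      rw [real_inner_self_eq_norm_mul_norm, hinext u t ht]; norm_num)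
    have hc : ⟪deriv (fun v => X v t) s, deriv (fun u => deriv (fun v => X v t) u) s⟫
        = ⟪deriv (fun u => deriv (fun v => X v t) u) s, deriv (fun v => X v t) s⟫ :=
      real_inner_comm _ _
    linarith [h, hc]
  -- mixed orthogonality: ⟪∂ₛe₁, T⟫ + ⟪e₁, ∂ₛT⟫ = 0
  have hmix : ⟪deriv (fun u => e₁ u t) s, deriv (fun u => X u t) s⟫
      + ⟪e₁ s t, deriv (fun u => deriv (fun v => X v t) u) s⟫ = 0 := by
    have h := inner_deriv_zero hE1 hTv (c := 0) (fun u => h1t u t ht)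
    linarith [h]
  -- ⟪Q, T⟫ = 0 where Q = ∂ₛ∂ₜX
  have hswapX : deriv (fun τ => deriv (fun u => X u τ) s) t
      = deriv (fun u => deriv (fun τ => X u τ) t) s := deriv_swap hX s t
  have hQT : ⟪deriv (fun u => deriv (fun τ => X u τ) t) s, deriv (fun u => X u t) s⟫ = (0:ℝ) := by
    have hg : HasDerivAt (fun τ => deriv (fun u => X u τ) s)
        (deriv (fun τ => deriv (fun u => X u τ) s) t) t :=
      hasDerivAt_snd' (f := fun a b => deriv (fun u => X u b) a) (contDiff_pd1 hX) s t
    have hc : ∀ᶠ τ in nhds t, ⟪deriv (fun u => X u τ) s, deriv (fun u => X u τ) s⟫ = (1:ℝ) := by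
      filter_upwards [Ioo_mem_nhds ht.1 ht.2] with τ hτ
      rw [real_inner_self_eq_norm_mul_norm, hinext s τ hτ]; norm_num
    have h := inner_deriv_zero_eventually hg hg hc
    rw [hswapX] at h
    have hcomm : ⟪deriv (fun u => X u t) s, deriv (fun u => deriv (fun τ => X u τ) t) s⟫
        = ⟪deriv (fun u => deriv (fun τ => X u τ) t) s, deriv (fun u => X u t) s⟫ :=
      real_inner_comm _ _
    linarith [h, hcomm]
  -- derivative of the frame relation e₂ = T × e₁
  have o9 : deriv (fun u => e₂ u t) s
      = cross3 (deriv (fun u => deriv (fun v => X v t) u) s) (e₁ s t)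
        + cross3 (deriv (fun u => X u t) s) (deriv (fun u => e₁ u t) s) := by
    have hfun : (fun u => e₂ u t)
        = fun u => cross3 (deriv (fun v => X v t) u) (e₁ u t) :=
      funext fun u => he2def u t ht
    have h := hasDerivAt_cross hTv hE1
    rw [← hfun] at h
    exact hE2.unique h
  -- time derivative of ∂ₛe₁ via Clairaut and the evolution law
  have hswap1 : deriv (fun τ => deriv (fun u => e₁ u τ) s) t
      = deriv (fun u => deriv (fun τ => e₁ u τ) t) s := deriv_swap he₁ s t
  have hMeq : deriv (fun u => deriv (fun τ => e₁ u τ) t) s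
      = cross3 (deriv (fun u => e₂ u t) s) (deriv (fun v => deriv (fun τ => X v τ) t) s)
        + cross3 (e₂ s t) (deriv (fun u => deriv (fun v => deriv (fun τ => X v τ) t) u) s)
        + (ω s t • deriv (fun u => e₂ u t) s + deriv (fun u => ω u t) s • e₂ s t) := by
    have hfun : (fun u => deriv (fun τ => e₁ u τ) t)
        = fun u => cross3 (e₂ u t) (deriv (fun v => deriv (fun τ => X v τ) t) u)
            + ω u t • e₂ u t :=
      funext fun u => hev1 u t ht
    have h : HasDerivAt (fun u => cross3 (e₂ u t) (deriv (fun v => deriv (fun τ => X v τ) t) u)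
        + ω u t • e₂ u t) _ s := (hasDerivAt_cross hE2 hQf).add (hωs.smul hE2)
    rw [← hfun] at h
    exact h.deriv
  -- rewrite the second iterated derivative
  have hIter : iteratedDeriv 2 (fun u => X u t) s
      = deriv (fun u => deriv (fun v => X v t) u) s := by
    rw [show (2:ℕ) = 1 + 1 from rfl, iteratedDeriv_succ, iteratedDeriv_one]
  -- the main differentiation step
  have hP : HasDerivAt (fun τ => deriv (fun u => e₁ u τ) s)
      (deriv (fun τ => deriv (fun u => e₁ u τ) s) t) t :=
    hasDerivAt_snd' (f := fun a b => deriv (fun u => e₁ u b) a) (contDiff_pd1 he₁) s t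
  have hE2t : HasDerivAt (fun τ => e₂ s τ) (deriv (fun τ => e₂ s τ) t) t :=
    hasDerivAt_snd' he₂ s t
  have hmain := (HasDerivAt.inner ℝ hP hE2t).deriv
  rw [hmain, hev2 s t ht, hswap1, hMeq, hIter, o9, he2def s t ht]
  rw [o9, he2def s t ht] at o2
  simp only [inner_add_left] at o2
  -- expand inner products and finish with the algebraic identity
  have KEY := key_algebra (deriv (fun u => X u t) s) (e₁ s t)
    (deriv (fun u => deriv (fun v => X v t) u) s) (deriv (fun u => e₁ u t) s)
    (deriv (fun u => deriv (fun τ => X u τ) t) s)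
    hTT hee hTe hTdT hQT (by linarith [hmix])
  simp only [inner_add_left, inner_sub_right, inner_neg_right, real_inner_smul_left,
    real_inner_smul_right, inner_add_right]
  rw [he2def s t ht] at he2e2
  have cz := inner_cross3_self_left (cross3 (deriv (fun u => X u t) s) (e₁ s t))
      (deriv (fun u => deriv (fun v => deriv (fun τ => X v τ) t) u) s)
  linear_combination KEY + ω s t * o2 - ω s t * o1 + deriv (fun u => ω u t) s * he2e2 + cz
end
end

section
/- Let n be a nonzero integer, κ̄ ∈ ℝ, η ∈ (0,1], α > 0, and let M be the complex 2×2 matrix M = [[−(2πn)⁴, −i(2πn)κ̄((2πn)²(η−1) + η/α)], [i(2πn)³κ̄, −(2πn)²(η/α + (η−1)κ̄²)]]. (i) If (2πn)² > κ̄², then every μ ∈ ℂ with det(M − μI) = 0 satisfies Re μ < 0. (ii) If (2πn)² < κ̄², then there exists a real μ > 0 with det(M − μI) = 0. -/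
open Matrix

noncomputable section

/-- spectrum of the linearized curvature–twist system about a
multiply-covered circle: stability of high wavenumbers when `(2πn)² > κ̄²`,
and a Michell-type instability when `(2πn)² < κ̄²`. -/
theorem linearized_rod_spectrum (n : ℤ) (hn : n ≠ 0) (κ η α : ℝ)
    (hη0 : 0 < η) (hη1 : η ≤ 1) (hα : 0 < α)
    (M : Matrix (Fin 2) (Fin 2) ℂ)
    (hM : M = !![(-(2 * Real.pi * (n:ℝ)) ^ 4 : ℂ),
        -Complex.I * (2 * Real.pi * (n:ℝ)) * (κ : ℂ) *
          ((2 * Real.pi * (n:ℝ)) ^ 2 * ((η : ℂ) - 1) + (η : ℂ) / (α : ℂ));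
        Complex.I * (2 * Real.pi * (n:ℝ)) ^ 3 * (κ : ℂ),
        -((2 * Real.pi * (n:ℝ)) ^ 2 : ℂ) * ((η : ℂ) / (α : ℂ) + ((η : ℂ) - 1) * (κ : ℂ) ^ 2)]) :
    ((κ ^ 2 < (2 * Real.pi * (n:ℝ)) ^ 2) →
      ∀ μ : ℂ, (M - μ • (1 : Matrix (Fin 2) (Fin 2) ℂ)).det = 0 → μ.re < 0) ∧
    (((2 * Real.pi * (n:ℝ)) ^ 2 < κ ^ 2) →
      ∃ μ : ℝ, 0 < μ ∧ (M - (μ : ℂ) • (1 : Matrix (Fin 2) (Fin 2) ℂ)).det = 0) := by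
  set q : ℝ := 2 * Real.pi * (n : ℝ) with hqdef
  have hq : q ≠ 0 := by
    have : (n : ℝ) ≠ 0 := Int.cast_ne_zero.mpr hn
    positivity
  have hq2 : 0 < q ^ 2 := by positivity
  set T : ℝ := q ^ 4 + q ^ 2 * (η / α + (η - 1) * κ ^ 2) with hT
  set D : ℝ := (η / α) * q ^ 4 * (q ^ 2 - κ ^ 2) with hD
  have key : ∀ μ : ℂ, (M - μ • (1 : Matrix (Fin 2) (Fin 2) ℂ)).det
      = μ ^ 2 + (T : ℂ) * μ + (D : ℂ) := by
    intro μ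
    subst hM
    rw [Matrix.det_fin_two]
    simp [Matrix.sub_apply, Matrix.smul_apply, Matrix.one_apply]
    push_cast [hT, hD, hqdef]
    ring_nf
    rw [Complex.I_sq]
    push_cast
    ring
  constructor
  · intro hκ μ hμ
    rw [key μ] at hμ
    have hTpos : 0 < T := by
      rw [hT]
      have h1 : (1 - η) * κ ^ 2 ≤ κ ^ 2 := by nlinarith [sq_nonneg κ]
      have h2 : 0 < η / α := div_pos hη0 hα
      nlinarith
    have hDpos : 0 < D := by
      rw [hD]
      have h2 : 0 < η / α := div_pos hη0 hα
      have hq4 : 0 < q ^ 4 := by positivity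
      exact mul_pos (mul_pos h2 hq4) (by linarith)
    set x := μ.re
    set y := μ.im
    have hre : x ^ 2 - y ^ 2 + T * x + D = 0 := by
      have := congrArg Complex.re hμ
      simpa [Complex.add_re, Complex.mul_re, pow_two, Complex.ofReal_re,
        Complex.ofReal_im] using this
    have him : 2 * x * y + T * y = 0 := by
      have := congrArg Complex.im hμ
      simp [Complex.add_im, Complex.mul_im, pow_two, Complex.ofReal_re,
        Complex.ofReal_im] at this
      linarith
    by_cases hy : y = 0
    · rw [hy] at hre
      by_contra h
      push_neg at h
      nlinarith
    · have hx : 2 * x + T = 0 := by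
        have : y * (2 * x + T) = 0 := by linarith [him]
        rcases mul_eq_zero.mp this with h | h
        · exact absurd h hy
        · exact h
      nlinarith
  · intro hκ
    have hDneg : D < 0 := by
      rw [hD]
      have h2 : 0 < η / α := div_pos hη0 hα
      have hq4 : 0 < q ^ 4 := by positivity
      exact mul_neg_of_pos_of_neg (mul_pos h2 hq4) (by linarith)
    set s : ℝ := Real.sqrt (T ^ 2 - 4 * D) with hs
    have hs2 : s ^ 2 = T ^ 2 - 4 * D := Real.sq_sqrt (by nlinarith)
    have hsnn : 0 ≤ s := Real.sqrt_nonneg _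
    have hsT : T < s := by
      rcases le_or_gt 0 T with h | h
      · rw [hs]
        exact (Real.lt_sqrt h).mpr (by nlinarith)
      · linarith
    refine ⟨(-T + s) / 2, ?_, ?_⟩
    · exact div_pos (by linarith) two_pos
    · rw [key]
      have h0 : ((-T + s) / 2) ^ 2 + T * ((-T + s) / 2) + D = 0 := by
        linear_combination hs2 / 4
      calc ((((-T + s) / 2 : ℝ) : ℂ)) ^ 2 + (T : ℂ) * (((-T + s) / 2 : ℝ) : ℂ) + (D : ℂ)
          = ((((-T + s) / 2) ^ 2 + T * ((-T + s) / 2) + D : ℝ) : ℂ) := by push_cast; ring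
        _ = 0 := by rw [h0]; simp
end
end
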